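/- arXiv:2005.04354 — 6 statements merged into one kernel-verified Lean document; each statement's English description precedes it below -/
import Mathlib

section
/- Let p ≥ 2, θ ∈ (0, 1/2), and let T and T' be trees on the vertex set {1,…,p}. For any samples x_1,…,x_n ∈ {0,1}^p, the log-likelihood comparison ∑_{k=1}^n log P_{T,θ}(x_k) ≥ ∑_{k=1}^n log P_{T',θ}(x_k) holds if and only if ∑_{{i,j}∈E(T)} Â_{i,j} ≥ ∑_{{i,j}∈E(T')} Â_{i,j}. Consequently, a tree T maximizes the likelihood of the samples over all trees on {1,…,p} if and only if its edge set is a maximum-weight spanning tree of the complete graph on {1,…,p} with edge weights Â_{i,j}. -/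
open scoped Classical BigOperators
open Filter

noncomputable section

/-- Symmetric pair weight `w(x i, x j)` lifted to unordered pairs. -/
def pairWeight (θ : ℝ) {p : ℕ} (x : Fin p → Bool) : Sym2 (Fin p) → ℝ :=
  Sym2.lift ⟨fun i j => if x i = x j then 1 - θ else θ, fun i j => by
    dsimp only
    by_cases h : x i = x j
    · rw [if_pos h, if_pos h.symm]
    · rw [if_neg h, if_neg (fun hh => h hh.symm)]⟩

/-- The homogeneous zero-external-field Ising tree distribution. -/
def isingP (θ : ℝ) {p : ℕ} (T : SimpleGraph (Fin p)) (x : Fin p → Bool) : ℝ :=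
  (1 / 2) * ∏ e ∈ T.edgeFinset, pairWeight θ x e

/-- Probability of an event `A` about `n` i.i.d. samples from pmf `P`. -/
def iidProb {p : ℕ} (P : (Fin p → Bool) → ℝ) (n : ℕ)
    (A : Set (Fin n → Fin p → Bool)) : ℝ :=
  ∑ xs : Fin n → Fin p → Bool, if xs ∈ A then ∏ k, P (xs k) else 0

/-- Empirical agreement weight. -/
def Ahat {p n : ℕ} (xs : Fin n → Fin p → Bool) (i j : Fin p) : ℝ :=
  ((Finset.univ.filter (fun k : Fin n => xs k i = xs k j)).card : ℝ) / n

/-- Empirical agreement weight on unordered pairs. -/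
def AhatSym {p n : ℕ} (xs : Fin n → Fin p → Bool) : Sym2 (Fin p) → ℝ :=
  Sym2.lift ⟨fun i j => Ahat xs i j, fun i j => by
    have h : (Finset.univ.filter fun k : Fin n => xs k i = xs k j)
        = (Finset.univ.filter fun k : Fin n => xs k j = xs k i) :=
      Finset.filter_congr (fun k _ => ⟨Eq.symm, Eq.symm⟩)
    simp only [Ahat, h]⟩

/-- The path (Markov chain) tree on 3 nodes with edges {1,2},{2,3}. -/
def chainA : SimpleGraph (Fin 3) := SimpleGraph.fromEdgeSet {s(0,1), s(1,2)}

def chainB : SimpleGraph (Fin 3) := SimpleGraph.fromEdgeSet {s(0,2), s(1,2)}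

def chainC : SimpleGraph (Fin 3) := SimpleGraph.fromEdgeSet {s(0,1), s(0,2)}

def path4 : SimpleGraph (Fin 4) := SimpleGraph.fromEdgeSet {s(0,1), s(1,2), s(2,3)}

def Kexp (θ : ℝ) : ℝ := -Real.log (1 - θ * (1 - Real.sqrt (4 * θ * (1 - θ))))

def sigmaSq (θ : ℝ) : ℝ := θ * Real.sqrt (4 * θ * (1 - θ)) * Real.exp (Kexp θ)

def zTheta (θ : ℝ) : ℝ := Real.sqrt (θ / (1 - θ))

def ftilde (θ : ℝ) (n : ℕ) : ℝ :=
  Real.exp (-(n : ℝ) * Kexp θ) / Real.sqrt (2 * Real.pi * sigmaSq θ * n)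
    * (1 + (1 - 3 * sigmaSq θ) / (8 * sigmaSq θ * n))

def fn (θ : ℝ) (n : ℕ) : ℝ :=
  ftilde θ n / (1 - zTheta θ)
    * (1 - zTheta θ * (1 + zTheta θ) / (2 * (1 - zTheta θ) ^ 2 * sigmaSq θ * n))

/-- Hamming distance. -/
def hamming {p : ℕ} (x y : Fin p → Bool) : ℕ :=
  (Finset.univ.filter (fun i => x i ≠ y i)).card

/-- Noisy (BSC with crossover probability q) version of a distribution. -/
def noisy (q : ℝ) {p : ℕ} (P : (Fin p → Bool) → ℝ) (y : Fin p → Bool) : ℝ :=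
  ∑ x : Fin p → Bool, q ^ hamming x y * (1 - q) ^ (p - hamming x y) * P x

def beta1 (θ q : ℝ) : ℝ :=
  ((1 - q) ^ 3 + q ^ 3) * (θ * (1 - θ) / 2) + q * (1 - q) * ((1 - θ * (1 - θ)) / 2)

def beta2 (θ q : ℝ) : ℝ :=
  ((1 - q) ^ 3 + q ^ 3) * (θ ^ 2 / 2) + q * (1 - q) * ((1 - θ ^ 2) / 2)

def Kq (θ q : ℝ) : ℝ :=
  -Real.log (1 - 4 * ((beta1 θ q + beta2 θ q) / 2 - Real.sqrt (beta1 θ q * beta2 θ q)))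

def mu2 (θ q : ℝ) : ℝ := 4 * Real.sqrt (beta1 θ q * beta2 θ q) * Real.exp (Kq θ q)

def zq (θ q : ℝ) : ℝ := Real.sqrt (beta2 θ q / beta1 θ q)

def ftildeq (θ q : ℝ) (n : ℕ) : ℝ :=
  Real.exp (-(n : ℝ) * Kq θ q) / Real.sqrt (2 * Real.pi * mu2 θ q * n)
    * (1 + (1 - 3 * mu2 θ q) / (8 * mu2 θ q * n))

def fnq (θ q : ℝ) (n : ℕ) : ℝ :=
  ftildeq θ q n / (1 - zq θ q)
    * (1 - zq θ q * (1 + zq θ q) / (2 * (1 - zq θ q) ^ 2 * mu2 θ q * n))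

/-- Marginal of a pmf on `{0,1}^p` on a single coordinate. -/
def marg1 {p : ℕ} (Q : (Fin p → Bool) → ℝ) (i : Fin p) (a : Bool) : ℝ :=
  ∑ x ∈ Finset.univ.filter (fun x : Fin p → Bool => x i = a), Q x

/-- Marginal of a pmf on `{0,1}^p` on a pair of coordinates. -/
def marg2 {p : ℕ} (Q : (Fin p → Bool) → ℝ) (i j : Fin p) (a b : Bool) : ℝ :=
  ∑ x ∈ Finset.univ.filter (fun x : Fin p → Bool => x i = a ∧ x j = b), Q x

/-- Kullback-Leibler divergence between pmfs on a finite type. -/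
def klDiv {X : Type*} [Fintype X] (Q P : X → ℝ) : ℝ :=
  ∑ x : X, Q x * Real.log (Q x / P x)

/-- Empirical mutual information between coordinates `i` and `j`. -/
def mutInf {p : ℕ} (Q : (Fin p → Bool) → ℝ) (i j : Fin p) : ℝ :=
  ∑ a : Bool, ∑ b : Bool,
    marg2 Q i j a b * Real.log (marg2 Q i j a b / (marg1 Q i a * marg1 Q j b))

end

/-!
Since `log P_{T,θ}(x) = log (1/2) + ∑_{e ∈ E(T)} log w(x_e)` and `log w(x_e)` equals `log θ` plus
`log ((1-θ)/θ)` exactly when the endpoints of `e` agree, the log-likelihood of the samples is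
`n (log (1/2) + |E(T)| log θ) + log ((1-θ)/θ) · n · ∑_{e ∈ E(T)} Â_e`. All trees on `p` vertices have
`p - 1` edges, so the first term does not depend on the tree, and `log ((1-θ)/θ) > 0` for `θ < 1/2`.
-/

open Finset Real

variable {p n : ℕ}

lemma pairWeight_pos {θ : ℝ} (hθ0 : 0 < θ) (hθ1 : θ < 1) (x : Fin p → Bool)
    (e : Sym2 (Fin p)) : 0 < pairWeight θ x e := by
  induction e using Sym2.ind with
  | _ i j =>
    change 0 < if x i = x j then 1 - θ else θ
    split_ifs <;> linarith

lemma log_pairWeight_mk (θ : ℝ) (x : Fin p → Bool) (i j : Fin p) :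
    log (pairWeight θ x s(i, j)) =
      log θ + (log (1 - θ) - log θ) * if x i = x j then 1 else 0 := by
  change log (if x i = x j then 1 - θ else θ) = _
  split_ifs <;> ring

lemma sum_boole_eq_natCast_mul_AhatSym (x : Fin n → Fin p → Bool) (i j : Fin p) :
    ∑ k, (if x k i = x k j then (1 : ℝ) else 0) = n * AhatSym x s(i, j) := by
  change _ = n * Ahat x i j
  rcases n.eq_zero_or_pos with rfl | hn
  · simp
  · rw [sum_boole, Ahat, mul_div_cancel₀ _ (by positivity)]

lemma sum_log_pairWeight (θ : ℝ) (x : Fin n → Fin p → Bool) (e : Sym2 (Fin p)) :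
    ∑ k, log (pairWeight θ (x k) e) =
      n * log θ + (log (1 - θ) - log θ) * (n * AhatSym x e) := by
  induction e using Sym2.ind with
  | _ i j =>
    simp only [log_pairWeight_mk, sum_add_distrib, ← mul_sum, sum_boole_eq_natCast_mul_AhatSym,
      sum_const, card_univ, Fintype.card_fin, nsmul_eq_mul]

lemma log_isingP {θ : ℝ} (hθ0 : 0 < θ) (hθ1 : θ < 1) (T : SimpleGraph (Fin p))
    (x : Fin p → Bool) :
    log (isingP θ T x) = log (1 / 2) + ∑ e ∈ T.edgeFinset, log (pairWeight θ x e) := by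
  have hw : ∀ e ∈ T.edgeFinset, pairWeight θ x e ≠ 0 :=
    fun e _ => (pairWeight_pos hθ0 hθ1 x e).ne'
  rw [isingP, log_mul (by norm_num) (prod_ne_zero_iff.mpr hw), log_prod hw]

lemma sum_log_isingP {θ : ℝ} (hθ0 : 0 < θ) (hθ1 : θ < 1) (T : SimpleGraph (Fin p))
    (x : Fin n → Fin p → Bool) :
    ∑ k, log (isingP θ T (x k)) =
      n * (log (1 / 2) + #T.edgeFinset * log θ) +
        (log (1 - θ) - log θ) * (n * ∑ e ∈ T.edgeFinset, AhatSym x e) := by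
  simp only [log_isingP hθ0 hθ1, sum_add_distrib, sum_comm (s := univ), sum_log_pairWeight,
    sum_const, card_univ, Fintype.card_fin, nsmul_eq_mul, ← mul_sum]
  ring

lemma AhatSym_fin_zero (x : Fin 0 → Fin p → Bool) (e : Sym2 (Fin p)) : AhatSym x e = 0 := by
  induction e using Sym2.ind with
  | _ i j => simp [AhatSym, Ahat]

theorem sum_log_isingP_le_iff {θ : ℝ} (hθ0 : 0 < θ) (hθ1 : θ < 1 / 2)
    {S S' : SimpleGraph (Fin p)} (hcard : #S.edgeFinset = #S'.edgeFinset)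
    (x : Fin n → Fin p → Bool) :
    ∑ k, log (isingP θ S' (x k)) ≤ ∑ k, log (isingP θ S (x k)) ↔
      ∑ e ∈ S'.edgeFinset, AhatSym x e ≤ ∑ e ∈ S.edgeFinset, AhatSym x e := by
  rcases n.eq_zero_or_pos with rfl | hn
  · simp [AhatSym_fin_zero]
  have hlog : 0 < log (1 - θ) - log θ := sub_pos.mpr (log_lt_log hθ0 (by linarith))
  rw [sum_log_isingP hθ0 (by linarith), sum_log_isingP hθ0 (by linarith), hcard,
    add_le_add_iff_left, mul_le_mul_iff_right₀ hlog, mul_le_mul_iff_right₀ (by positivity)]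

theorem stmt0_general (p n : ℕ) (θ : ℝ) (hθ0 : 0 < θ) (hθ1 : θ < 1 / 2)
    (T T' : SimpleGraph (Fin p)) (hT : T.IsTree) (hT' : T'.IsTree)
    (x : Fin n → Fin p → Bool) :
    ((∑ k, Real.log (isingP θ T' (x k)) ≤ ∑ k, Real.log (isingP θ T (x k))) ↔
      (∑ e ∈ T'.edgeFinset, AhatSym x e ≤ ∑ e ∈ T.edgeFinset, AhatSym x e)) ∧
    ((∀ T'' : SimpleGraph (Fin p), T''.IsTree →
        ∑ k, Real.log (isingP θ T'' (x k)) ≤ ∑ k, Real.log (isingP θ T (x k))) ↔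
      (∀ T'' : SimpleGraph (Fin p), T''.IsTree →
        ∑ e ∈ T''.edgeFinset, AhatSym x e ≤ ∑ e ∈ T.edgeFinset, AhatSym x e)) := by
  have compare : ∀ S : SimpleGraph (Fin p), S.IsTree →
      (∑ k, log (isingP θ S (x k)) ≤ ∑ k, log (isingP θ T (x k)) ↔
        ∑ e ∈ S.edgeFinset, AhatSym x e ≤ ∑ e ∈ T.edgeFinset, AhatSym x e) := by
    intro S hS
    refine sum_log_isingP_le_iff hθ0 hθ1 ?_ x
    have := hT.card_edgeFinset
    have := hS.card_edgeFinset
    omega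
  exact ⟨compare T' hT', forall₂_congr compare⟩

/-- the log-likelihood comparison between two trees is equivalent to the
comparison of total empirical agreement weights, and consequently a tree maximizes the
likelihood over all trees iff it is a maximum-weight spanning tree for the weights `Â`. -/
theorem stmt0 (p n : ℕ) (hp : 2 ≤ p) (θ : ℝ) (hθ0 : 0 < θ) (hθ1 : θ < 1 / 2)
    (T T' : SimpleGraph (Fin p)) (hT : T.IsTree) (hT' : T'.IsTree)
    (x : Fin n → Fin p → Bool) :
    ((∑ k, Real.log (isingP θ T' (x k)) ≤ ∑ k, Real.log (isingP θ T (x k))) ↔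
      (∑ e ∈ T'.edgeFinset, AhatSym x e ≤ ∑ e ∈ T.edgeFinset, AhatSym x e)) ∧
    ((∀ T'' : SimpleGraph (Fin p), T''.IsTree →
        ∑ k, Real.log (isingP θ T'' (x k)) ≤ ∑ k, Real.log (isingP θ T (x k))) ↔
      (∀ T'' : SimpleGraph (Fin p), T''.IsTree →
        ∑ e ∈ T''.edgeFinset, AhatSym x e ≤ ∑ e ∈ T.edgeFinset, AhatSym x e)) :=
  stmt0_general p n θ hθ0 hθ1 T T' hT hT' x
end

section
/- Let p ≥ 2, θ ∈ (0, 1/2), and let T be a tree on {1,…,p}. For distinct vertices i and j whose graph distance in T equals d, the correlation decay property holds: P_{T,θ}({x : x_i = x_j}) = (1 + (1−2θ)^d)/2. In particular, this quantity is strictly decreasing in d, so for every non-edge pair {i,j} ∉ E(T) one has P_{T,θ}({x : x_i = x_j}) < 1 − θ. -/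
open scoped Classical BigOperators
open Filter

/-!
Write `c = 1 - 2θ` and `σ_v = ±1` for the spin of `x_v`. Every edge weight is
`(1 + c σ_u σ_v) / 2`, so expanding the product over the edges and summing over `x` gives the
high-temperature expansion: `E[∏_{v ∈ A} σ_v]` is the sum of `c ^ |S|` over the edge sets
`S ⊆ E(T)` whose odd-degree vertices are exactly `A`.

In a tree an edge set is determined by its odd-degree vertices: an edge `ab` lies in `S` iff an
odd number of them lie on `b`'s side of the bridge `ab`. For `A = ∅` the only such `S` is `∅`,
and for `A = {i, j}` it is the path from `i` to `j`; hence `E[σ_i σ_j] = c ^ d` and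
`P(x_i = x_j) = (1 + c ^ d) / 2`.
-/

namespace IsingTree

open Finset SimpleGraph

def spin (b : Bool) : ℝ := if b then -1 else 1

lemma sum_spin_pow (n : ℕ) : ∑ b : Bool, spin b ^ n = if Even n then 2 else 0 := by
  rcases Nat.even_or_odd n with h | h
  · norm_num [spin, h.neg_one_pow, h]
  · simp [spin, h.neg_one_pow, Nat.not_even_iff_odd.mpr h]

section Spins

variable {V : Type*} [DecidableEq V]

lemma sum_prod_spin_pow [Fintype V] (n : V → ℕ) :
    ∑ x : V → Bool, ∏ v, spin (x v) ^ n v =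
      if ∀ v, Even (n v) then 2 ^ Fintype.card V else 0 := by
  rw [← Fintype.prod_sum (fun v b => spin b ^ n v)]
  simp only [sum_spin_pow, prod_ite_zero, mem_univ, forall_const, prod_const, card_univ]

lemma prod_spin_eq_prod_pow [Fintype V] (x : V → Bool) (A : Finset V) :
    ∏ v ∈ A, spin (x v) = ∏ v, spin (x v) ^ (if v ∈ A then 1 else 0) := by
  simp only [pow_ite, pow_one, pow_zero, prod_ite_mem, univ_inter]

def edgeSpin (x : V → Bool) : Sym2 V → ℝ :=
  Sym2.lift ⟨fun u v => spin (x u) * spin (x v), fun _ _ => mul_comm _ _⟩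

def incDeg (S : Finset (Sym2 V)) (v : V) : ℕ := #{e ∈ S | v ∈ e}

def oddVertices [Fintype V] (S : Finset (Sym2 V)) : Finset V := {v | Odd (incDeg S v)}

lemma edgeSpin_eq_prod [Fintype V] (x : V → Bool) {e : Sym2 V} (he : ¬ e.IsDiag) :
    edgeSpin x e = ∏ v, spin (x v) ^ (if v ∈ e then 1 else 0) := by
  induction e using Sym2.ind with
  | _ a b =>
    have hab : a ≠ b := by simpa using he
    simp only [Sym2.mem_iff, pow_ite, pow_one, pow_zero]
    rw [prod_ite, prod_const_one, mul_one, filter_or, filter_eq', filter_eq', if_pos (mem_univ _),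
      if_pos (mem_univ _), prod_union (disjoint_singleton.mpr hab), prod_singleton, prod_singleton]
    rfl

lemma prod_edgeSpin [Fintype V] (x : V → Bool) {S : Finset (Sym2 V)}
    (hS : ∀ e ∈ S, ¬ e.IsDiag) :
    ∏ e ∈ S, edgeSpin x e = ∏ v, spin (x v) ^ incDeg S v := by
  rw [prod_congr rfl fun e he => edgeSpin_eq_prod x (hS e he), Finset.prod_comm]
  refine prod_congr rfl fun v _ => ?_
  rw [prod_pow_eq_pow_sum, sum_boole, Nat.cast_id, incDeg]

lemma even_incDeg_add_iff [Fintype V] (S : Finset (Sym2 V)) (A : Finset V) :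
    (∀ v, Even (incDeg S v + if v ∈ A then 1 else 0)) ↔ oddVertices S = A := by
  simp only [Finset.ext_iff, oddVertices, mem_filter, mem_univ, true_and]
  refine forall_congr' fun v => ?_
  split_ifs with hv <;> simp [hv, Nat.even_add_one]

lemma card_filter_mem_sym2 (C : Finset V) {u w : V} (huw : u ≠ w) :
    #{v ∈ C | v ∈ s(u, w)} = (if u ∈ C then 1 else 0) + (if w ∈ C then 1 else 0) := by
  have hdisj : Disjoint ({v ∈ C | v = u} : Finset V) {v ∈ C | v = w} :=
    disjoint_filter.mpr fun v _ hu hw => huw (hu.symm.trans hw)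
  simp only [Sym2.mem_iff, filter_or]
  rw [card_union_of_disjoint hdisj, filter_eq', filter_eq']
  split_ifs <;> simp

end Spins

section Acyclic

variable {V : Type*} [Fintype V] [DecidableEq V] {G : SimpleGraph V}

/-- Every other edge of `G` has both or neither endpoint on `b`'s side of the bridge `ab`, so
only `ab` contributes an odd number of incidences with that side. -/
lemma mem_iff_odd_card_oddVertices_reachable (hG : G.IsAcyclic) {a b : V} (hab : G.Adj a b)
    {S : Finset (Sym2 V)} (hS : ∀ e ∈ S, e ∈ G.edgeSet) :
    s(a, b) ∈ S ↔ Odd #{v ∈ oddVertices S | (G.deleteEdges {s(a, b)}).Reachable b v} := by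
  set C : Finset V := {v | (G.deleteEdges {s(a, b)}).Reachable b v}
  have hb : b ∈ C := by simp [C]
  have ha : a ∉ C := by
    simpa [C, reachable_comm] using isBridge_iff.mp (isAcyclic_iff_forall_adj_isBridge.mp hG hab)
  have hedge : ∀ e ∈ G.edgeSet, Odd #{v ∈ C | v ∈ e} ↔ e = s(a, b) := by
    intro e he
    induction e using Sym2.ind with
    | _ u w =>
      by_cases h : s(u, w) = s(a, b)
      · rw [h, card_filter_mem_sym2 C hab.ne]
        simp [ha, hb]
      · have huw : u ∈ C ↔ w ∈ C := by
          have : (G.deleteEdges {s(a, b)}).Adj u w := by simpa [h] using he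
          simpa [C] using ⟨fun h' => h'.trans this.reachable, fun h' => h'.trans this.reachable.symm⟩
        rw [card_filter_mem_sym2 C (G.ne_of_adj he), iff_false_intro h, iff_false]
        simp only [huw]
        split_ifs <;> decide
  have hfilter : ({v ∈ oddVertices S | (G.deleteEdges {s(a, b)}).Reachable b v} : Finset V)
      = {v ∈ C | Odd (incDeg S v)} := by
    ext v; simp [oddVertices, C, and_comm]
  rw [hfilter, ← odd_sum_iff_odd_card_odd]
  change _ ↔ Odd (∑ v ∈ C, #(S.bipartiteAbove (fun v e => v ∈ e) v))
  rw [sum_card_bipartiteAbove_eq_sum_card_bipartiteBelow, odd_sum_iff_odd_card_odd]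
  change _ ↔ Odd #{e ∈ S | Odd #{v ∈ C | v ∈ e}}
  rw [filter_congr fun e he => hedge e (hS e he), filter_eq']
  split_ifs with h <;> simp [h]

lemma eq_of_oddVertices_eq (hG : G.IsAcyclic) {S S' : Finset (Sym2 V)}
    (hS : ∀ e ∈ S, e ∈ G.edgeSet) (hS' : ∀ e ∈ S', e ∈ G.edgeSet)
    (h : oddVertices S = oddVertices S') : S = S' := by
  ext e
  induction e using Sym2.ind with
  | _ a b =>
    by_cases hab : G.Adj a b
    · rw [mem_iff_odd_card_oddVertices_reachable hG hab hS,
        mem_iff_odd_card_oddVertices_reachable hG hab hS', h]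
    · exact iff_of_false (fun he => hab (hS _ he)) (fun he => hab (hS' _ he))

lemma sum_filter_oddVertices_eq [Fintype G.edgeSet] {M : Type*} [AddCommMonoid M]
    (hG : G.IsAcyclic) (f : Finset (Sym2 V) → M) {F : Finset (Sym2 V)}
    (hF : F ⊆ G.edgeFinset) :
    ∑ S ∈ G.edgeFinset.powerset with oddVertices S = oddVertices F, f S = f F := by
  have hedges : ∀ S ∈ G.edgeFinset.powerset, ∀ e ∈ S, e ∈ G.edgeSet := fun S hS e he =>
    mem_edgeFinset.mp (mem_powerset.mp hS he)
  have hsingle : {S ∈ G.edgeFinset.powerset | oddVertices S = oddVertices F} = {F} := by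
    refine eq_singleton_iff_unique_mem.mpr ⟨mem_filter.mpr ⟨mem_powerset.mpr hF, rfl⟩, ?_⟩
    intro S hS
    rw [mem_filter] at hS
    exact eq_of_oddVertices_eq hG (hedges S hS.1) (hedges F (mem_powerset.mpr hF)) hS.2
  rw [hsingle, sum_singleton]

lemma _root_.SimpleGraph.Walk.IsTrail.oddVertices_edges_toFinset {u v : V} {w : G.Walk u v}
    (hw : w.IsTrail) (huv : u ≠ v) : oddVertices w.edges.toFinset = {u, v} := by
  ext x
  have hdeg : incDeg w.edges.toFinset x = w.edges.countP (x ∈ ·) := by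
    have : ({e ∈ w.edges.toFinset | x ∈ e} : Finset _) = (w.edges.filter (x ∈ ·)).toFinset := by
      ext; simp
    rw [incDeg, this, List.toFinset_card_of_nodup (hw.edges_nodup.filter _),
      List.countP_eq_length_filter]
  simp only [oddVertices, mem_filter, mem_univ, true_and, hdeg, ← Nat.not_even_iff_odd,
    hw.even_countP_edges_iff, mem_insert, mem_singleton]
  tauto

end Acyclic

lemma strictAnti_one_add_pow_div_two {c : ℝ} (hc0 : 0 < c) (hc1 : c < 1) :
    StrictAnti fun d : ℕ => (1 + c ^ d) / 2 := fun _ _ h => by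
  have := pow_lt_pow_right_of_lt_one₀ hc0 hc1 h
  dsimp only
  linarith

section Ising

variable (θ : ℝ) {p : ℕ} {T : SimpleGraph (Fin p)}

lemma pairWeight_eq (x : Fin p → Bool) (e : Sym2 (Fin p)) :
    pairWeight θ x e = (1 + (1 - 2 * θ) * edgeSpin x e) / 2 := by
  induction e using Sym2.ind with
  | _ i j =>
    change (if x i = x j then 1 - θ else θ) = (1 + (1 - 2 * θ) * (spin (x i) * spin (x j))) / 2
    cases x i <;> cases x j <;> norm_num [spin] <;> ring

lemma isingP_eq_sum_powerset (T : SimpleGraph (Fin p)) (x : Fin p → Bool) :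
    isingP θ T x = (∑ S ∈ T.edgeFinset.powerset, (1 - 2 * θ) ^ #S * ∏ e ∈ S, edgeSpin x e)
      / 2 ^ (#T.edgeFinset + 1) := by
  simp only [isingP, pairWeight_eq, prod_div_distrib, prod_const, prod_one_add, prod_mul_distrib]
  ring

lemma sum_isingP_mul_prod_spin (T : SimpleGraph (Fin p)) (A : Finset (Fin p)) :
    ∑ x, isingP θ T x * ∏ v ∈ A, spin (x v)
      = 2 ^ p / 2 ^ (#T.edgeFinset + 1) *
          ∑ S ∈ T.edgeFinset.powerset with oddVertices S = A, (1 - 2 * θ) ^ #S := by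
  have hprod : ∀ S ∈ T.edgeFinset.powerset, ∀ x : Fin p → Bool,
      (∏ e ∈ S, edgeSpin x e) * ∏ v ∈ A, spin (x v)
        = ∏ v, spin (x v) ^ (incDeg S v + if v ∈ A then 1 else 0) := by
    intro S hS x
    rw [prod_edgeSpin x fun e he => T.not_isDiag_of_mem_edgeSet
      (mem_edgeFinset.mp (mem_powerset.mp hS he)), prod_spin_eq_prod_pow, ← prod_mul_distrib]
    simp only [pow_add]
  simp_rw [isingP_eq_sum_powerset, div_mul_eq_mul_div, sum_mul, ← sum_div]
  congr 1
  rw [Finset.sum_comm, sum_filter, mul_sum]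
  refine sum_congr rfl fun S hS => ?_
  simp_rw [mul_assoc, hprod S hS, ← mul_sum, sum_prod_spin_pow, even_incDeg_add_iff,
    Fintype.card_fin]
  split_ifs <;> ring

lemma sum_isingP_mul_prod_spin_oddVertices (hT : T.IsTree) {F : Finset (Sym2 (Fin p))}
    (hF : F ⊆ T.edgeFinset) :
    ∑ x, isingP θ T x * ∏ v ∈ oddVertices F, spin (x v) = (1 - 2 * θ) ^ #F := by
  have hnorm : (2 : ℝ) ^ p / 2 ^ (#T.edgeFinset + 1) = 1 := by
    rw [hT.card_edgeFinset, Fintype.card_fin, div_self (by positivity)]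
  rw [sum_isingP_mul_prod_spin, hnorm, one_mul, sum_filter_oddVertices_eq hT.isAcyclic _ hF]

lemma sum_isingP (hT : T.IsTree) : ∑ x, isingP θ T x = 1 := by
  simpa [oddVertices, incDeg] using sum_isingP_mul_prod_spin_oddVertices θ hT (empty_subset _)

lemma sum_isingP_mul_spin_mul_spin (hT : T.IsTree) {i j : Fin p} (hij : i ≠ j) :
    ∑ x, isingP θ T x * (spin (x i) * spin (x j)) = (1 - 2 * θ) ^ T.dist i j := by
  obtain ⟨w, hw, hlen⟩ := hT.connected.exists_path_of_dist i j
  have hF : w.edges.toFinset ⊆ T.edgeFinset := fun e he =>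
    mem_edgeFinset.mpr (w.edges_subset_edgeSet (List.mem_toFinset.mp he))
  have hcard : #w.edges.toFinset = T.dist i j := by
    rw [List.toFinset_card_of_nodup hw.isTrail.edges_nodup, Walk.length_edges, hlen]
  rw [← hcard, ← sum_isingP_mul_prod_spin_oddVertices θ hT hF,
    hw.isTrail.oddVertices_edges_toFinset hij]
  simp_rw [prod_pair hij]

lemma sum_isingP_agree (hT : T.IsTree) {i j : Fin p} (hij : i ≠ j) :
    ∑ x with x i = x j, isingP θ T x = (1 + (1 - 2 * θ) ^ T.dist i j) / 2 :=
  calc ∑ x with x i = x j, isingP θ T x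
      = ∑ x, (isingP θ T x + isingP θ T x * (spin (x i) * spin (x j))) / 2 := by
        rw [sum_filter]
        refine sum_congr rfl fun x _ => ?_
        cases x i <;> cases x j <;> norm_num [spin]
    _ = (1 + (1 - 2 * θ) ^ T.dist i j) / 2 := by
        rw [← sum_div, sum_add_distrib, sum_isingP θ hT, sum_isingP_mul_spin_mul_spin θ hT hij]

end Ising

end IsingTree

theorem stmt2_general (p : ℕ) (θ : ℝ) (hθ0 : 0 < θ) (hθ1 : θ < 1 / 2)
    (T : SimpleGraph (Fin p)) (hT : T.IsTree) :
    (∀ i j : Fin p, i ≠ j →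
      ∑ x ∈ Finset.univ.filter (fun x : Fin p → Bool => x i = x j), isingP θ T x
        = (1 + (1 - 2 * θ) ^ (T.dist i j)) / 2) ∧
    (∀ d₁ d₂ : ℕ, d₁ < d₂ →
      (1 + (1 - 2 * θ) ^ d₂) / 2 < (1 + (1 - 2 * θ) ^ d₁) / 2) ∧
    (∀ i j : Fin p, i ≠ j → ¬ T.Adj i j →
      ∑ x ∈ Finset.univ.filter (fun x : Fin p → Bool => x i = x j), isingP θ T x < 1 - θ) := by
  have hanti := IsingTree.strictAnti_one_add_pow_div_two (c := 1 - 2 * θ) (by linarith)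
    (by linarith)
  refine ⟨fun i j hij => IsingTree.sum_isingP_agree θ hT hij, fun _ _ h => hanti h, ?_⟩
  intro i j hij hadj
  have hdist : 1 < T.dist i j := by
    have hpos := hT.connected.pos_dist_of_ne hij
    have hne : T.dist i j ≠ 1 := fun h => hadj (SimpleGraph.dist_eq_one_iff_adj.mp h)
    omega
  calc _ = (1 + (1 - 2 * θ) ^ T.dist i j) / 2 := IsingTree.sum_isingP_agree θ hT hij
    _ < (1 + (1 - 2 * θ) ^ 1) / 2 := hanti hdist
    _ = 1 - θ := by ring

/-- correlation decay: for distinct `i, j` at graph distance `d` in `T`,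
`P(x_i = x_j) = (1 + (1-2θ)^d)/2`; this quantity is strictly decreasing in `d`, so
for every non-edge pair the agreement probability is `< 1 - θ`. -/
theorem stmt2 (p : ℕ) (hp : 2 ≤ p) (θ : ℝ) (hθ0 : 0 < θ) (hθ1 : θ < 1 / 2)
    (T : SimpleGraph (Fin p)) (hT : T.IsTree) :
    (∀ i j : Fin p, i ≠ j →
      ∑ x ∈ Finset.univ.filter (fun x : Fin p → Bool => x i = x j), isingP θ T x
        = (1 + (1 - 2 * θ) ^ (T.dist i j)) / 2) ∧
    (∀ d₁ d₂ : ℕ, d₁ < d₂ →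
      (1 + (1 - 2 * θ) ^ d₂) / 2 < (1 + (1 - 2 * θ) ^ d₁) / 2) ∧
    (∀ i j : Fin p, i ≠ j → ¬ T.Adj i j →
      ∑ x ∈ Finset.univ.filter (fun x : Fin p → Bool => x i = x j), isingP θ T x < 1 - θ) :=
  stmt2_general p θ hθ0 hθ1 T hT
end

section
/- Let p ≥ 2 and θ ∈ (0, 1/2). The map T ↦ P_{T,θ} from trees on {1,…,p} to probability distributions on {0,1}^p is injective: if T and T' are trees on {1,…,p} with E(T) ≠ E(T'), then P_{T,θ} ≠ P_{T',θ}. -/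
open scoped Classical BigOperators
open Filter

/-!
Writing `c(x)` for the number of edges of `T` whose endpoints `x` colours differently,
`P_{T,θ}(x) = ½ (1 - θ)^{|E(T)|} (θ / (1 - θ))^{c(x)}`. A constant `x` cuts no edge, so
`P_{T,θ}` determines `|E(T)|`, and then, as `0 < θ / (1 - θ) < 1`, every cut size `c(x)`.
Cut sizes determine the graph: if `C_i` is the cut of the indicator of `i`, the cut of the
indicator of `{i, j}` is `C_i ∆ C_j`, so the cut sizes give `|C_i ∩ C_j|`, which for `i ≠ j`
is `1` if `i ~ j` and `0` otherwise.
-/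

open Finset
open scoped symmDiff

theorem Finset.card_symmDiff_add_two_mul_card_inter {α : Type*} [DecidableEq α]
    (s t : Finset α) : #(s ∆ t) + 2 * #(s ∩ t) = #s + #t := by
  have hsub : s ∩ t ⊆ s ∪ t := inter_subset_left.trans subset_union_left
  rw [symmDiff_eq_sup_sdiff_inf, sup_eq_union, inf_eq_inter, card_sdiff_of_subset hsub,
    ← card_union_add_card_inter s t]
  have := card_le_card hsub
  omega

namespace SimpleGraph

variable {V : Type*}

def edgeXor (x : V → Bool) : Sym2 V → Bool :=
  Sym2.lift ⟨fun a b => xor (x a) (x b), fun _ _ => Bool.xor_comm _ _⟩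

@[simp]
theorem edgeXor_mk (x : V → Bool) (a b : V) : edgeXor x s(a, b) = xor (x a) (x b) := rfl

theorem edgeXor_xor (x y : V → Bool) (e : Sym2 V) :
    edgeXor (fun v => xor (x v) (y v)) e = xor (edgeXor x e) (edgeXor y e) := by
  induction e using Sym2.ind with
  | _ a b => simp only [edgeXor_mk]; cases x a <;> cases x b <;> cases y a <;> cases y b <;> rfl

variable (G : SimpleGraph V) [Fintype G.edgeSet]

def cutEdges (x : V → Bool) : Finset (Sym2 V) := G.edgeFinset.filter fun e => edgeXor x e

theorem cutEdges_const (b : Bool) : G.cutEdges (fun _ => b) = ∅ := by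
  refine filter_eq_empty_iff.2 fun e _ => ?_
  induction e using Sym2.ind with
  | _ a b => simp

theorem cutEdges_xor [DecidableEq V] (x y : V → Bool) :
    G.cutEdges (fun v => xor (x v) (y v)) = G.cutEdges x ∆ G.cutEdges y := by
  ext e
  simp only [cutEdges, edgeXor_xor, mem_symmDiff, mem_filter]
  cases edgeXor x e <;> cases edgeXor y e <;> simp

theorem card_cutEdges_xor_add_two_mul_card_inter [DecidableEq V] (x y : V → Bool) :
    #(G.cutEdges fun v => xor (x v) (y v)) + 2 * #(G.cutEdges x ∩ G.cutEdges y)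
      = #(G.cutEdges x) + #(G.cutEdges y) := by
  rw [cutEdges_xor]
  exact card_symmDiff_add_two_mul_card_inter _ _

theorem adj_iff_cutEdges_inter_nonempty [DecidableEq V] {i j : V} (hij : i ≠ j) :
    G.Adj i j ↔
      (G.cutEdges (fun v => decide (v = i)) ∩ G.cutEdges (fun v => decide (v = j))).Nonempty := by
  constructor
  · intro h
    exact ⟨s(i, j), by simp [cutEdges, h, hij, hij.symm]⟩
  · rintro ⟨e, he⟩
    induction e using Sym2.ind with
    | _ a b =>
      simp only [cutEdges, mem_inter, mem_filter, mem_edgeFinset, mem_edgeSet, edgeXor_mk,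
        bne_iff_ne, ne_eq, decide_eq_decide] at he
      obtain ⟨⟨hab, hi⟩, -, hj⟩ := he
      grind [hab.symm]

theorem eq_of_card_cutEdges_eq [DecidableEq V] {G' : SimpleGraph V} [Fintype G'.edgeSet]
    (h : ∀ x, #(G.cutEdges x) = #(G'.cutEdges x)) : G = G' := by
  ext i j
  rcases eq_or_ne i j with rfl | hij
  · simp
  have := G.card_cutEdges_xor_add_two_mul_card_inter (fun v => v = i) (fun v => v = j)
  have := G'.card_cutEdges_xor_add_two_mul_card_inter (fun v => v = i) (fun v => v = j)
  rw [adj_iff_cutEdges_inter_nonempty G hij, adj_iff_cutEdges_inter_nonempty G' hij,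
    ← card_pos, ← card_pos]
  grind

end SimpleGraph

open SimpleGraph

theorem pairWeight_eq_ite (θ : ℝ) {p : ℕ} (x : Fin p → Bool) (e : Sym2 (Fin p)) :
    pairWeight θ x e = if edgeXor x e then θ else 1 - θ := by
  induction e using Sym2.ind with
  | _ a b => cases x a <;> cases x b <;> simp [pairWeight]

theorem isingP_eq (θ : ℝ) (hθ : θ ≠ 1) {p : ℕ} (T : SimpleGraph (Fin p)) (x : Fin p → Bool) :
    isingP θ T x = 1 / 2 * (1 - θ) ^ #T.edgeFinset * (θ / (1 - θ)) ^ #(T.cutEdges x) := by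
  have hθ' : 1 - θ ≠ 0 := sub_ne_zero.2 hθ.symm
  have hfactor : ∀ e, pairWeight θ x e = (1 - θ) * if edgeXor x e then θ / (1 - θ) else 1 := by
    intro e
    rw [pairWeight_eq_ite]
    split_ifs <;> field_simp
  rw [isingP, mul_assoc, prod_congr rfl fun e _ => hfactor e, prod_mul_distrib, prod_const,
    ← prod_filter, prod_const, cutEdges]

theorem isingP_injective {θ : ℝ} (hθ0 : 0 < θ) (hθ1 : θ < 1 / 2) {p : ℕ} :
    Function.Injective (isingP θ : SimpleGraph (Fin p) → (Fin p → Bool) → ℝ) := by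
  intro T T' h
  have hθ' : 0 < 1 - θ := by linarith
  have hP : ∀ x, isingP θ T x = isingP θ T' x := congrFun h
  simp only [isingP_eq θ (by linarith)] at hP
  have hm : #T.edgeFinset = #T'.edgeFinset := by
    have := hP fun _ => false
    simp only [cutEdges_const, card_empty, pow_zero, mul_one] at this
    exact pow_right_injective₀ hθ' (by linarith) (mul_left_cancel₀ (by norm_num) this)
  refine eq_of_card_cutEdges_eq T fun x => ?_
  have := hP x
  rw [hm] at this
  exact pow_right_injective₀ (by positivity) (div_ne_one_of_ne (by linarith))
    (mul_left_cancel₀ (by positivity) this)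

theorem stmt3_general (p : ℕ) (θ : ℝ) (hθ0 : 0 < θ) (hθ1 : θ < 1 / 2)
    (T T' : SimpleGraph (Fin p))
    (hne : T.edgeSet ≠ T'.edgeSet) :
    isingP θ T ≠ isingP θ T' :=
  fun h => hne (congrArg edgeSet (isingP_injective hθ0 hθ1 h))

/-- the map `T ↦ P_{T,θ}` is injective on trees. -/
theorem stmt3 (p : ℕ) (hp : 2 ≤ p) (θ : ℝ) (hθ0 : 0 < θ) (hθ1 : θ < 1 / 2)
    (T T' : SimpleGraph (Fin p)) (hT : T.IsTree) (hT' : T'.IsTree)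
    (hne : T.edgeSet ≠ T'.edgeSet) :
    isingP θ T ≠ isingP θ T' :=
  stmt3_general p θ hθ0 hθ1 T T' hne
end

section
/- Let θ₁, θ₃ ∈ (0, 1/2) and let P̃ be the probability distribution on {0,1}³ defined by P̃(x₁,x₂,x₃) = (1/2)·w₁(x₁,x₂)·w₃(x₂,x₃), where wₛ(a,b) = 1−θₛ if a = b and θₛ if a ≠ b. Let x_1,…,x_n be i.i.d. samples from P̃ (probabilities taken under the n-fold product measure P̃^{⊗n}). Then lim_{n→∞} −(1/n)·log ℙ(Â_{1,3} ≥ Â_{1,2}) = −log(1 − θ₃·(1 − √(4θ₁(1−θ₁)))). -/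
open scoped Classical BigOperators
open Filter

/-- The inhomogeneous 3-node chain distribution `P̃`. -/
noncomputable def Ptilde (θ₁ θ₃ : ℝ) (x : Fin 3 → Bool) : ℝ :=
  (1 / 2) * (if x 0 = x 1 then 1 - θ₁ else θ₁) * (if x 1 = x 2 then 1 - θ₃ else θ₃)


/-!
Write `Z = 𝟙[x₁ = x₃] - 𝟙[x₁ = x₂]`, so that the event is `∑ₖ Z(xₖ) ≥ 0`. Tilting `P̃` by
`r^Z` with `r = √((1 - θ₁)/θ₁) ≥ 1` produces a measure of total mass
`ρ = 1 - θ₃ (1 - √(4θ₁(1 - θ₁)))` that is invariant under swapping `x₂` and `x₃`, a swap that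
flips the sign of `Z`. The Chernoff bound gives `ℙ ≤ ρⁿ`. Conversely, under the tilted law the
sum `∑ₖ Z(xₖ)` is symmetric, so it is nonnegative with probability at least `1/2`, and a
second Chernoff bound (with `cosh s ≤ exp (s²/2)`) shows that it exceeds `2√n` with probability at
most `1/4`. Undoing the tilt on `{0 ≤ ∑ₖ Z(xₖ) ≤ 2√n}` costs a factor `r^(-2√n) = e^(-o(n))`.
-/

open Real Filter Topology

noncomputable section

theorem tendsto_neg_inv_mul_log_of_pow_bounds {a g : ℕ → ℝ} {ρ : ℝ} (hρ : 0 < ρ)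
    (hg : Tendsto (fun n : ℕ => g n / n) atTop (𝓝 0))
    (hlow : ∀ᶠ n in atTop, ρ ^ n * exp (-g n) ≤ a n) (hup : ∀ᶠ n in atTop, a n ≤ ρ ^ n) :
    Tendsto (fun n : ℕ => -(1 / (n : ℝ)) * log (a n)) atTop (𝓝 (-log ρ)) := by
  have hlow' : ∀ᶠ n : ℕ in atTop, 0 < n ∧ 0 < a n ∧ n * log ρ - g n ≤ log (a n) := by
    filter_upwards [hlow, eventually_gt_atTop 0] with n hlow hn
    have hpos : 0 < ρ ^ n * exp (-g n) := by positivity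
    refine ⟨hn, hpos.trans_le hlow, ?_⟩
    have hlog := log_le_log hpos hlow
    rw [log_mul (pow_pos hρ n).ne' (exp_pos _).ne', log_pow, log_exp] at hlog
    linarith
  refine tendsto_of_tendsto_of_tendsto_of_le_of_le' tendsto_const_nhds
    (by simpa using hg.const_add (-log ρ)) ?_ ?_
  · filter_upwards [hlow', hup] with n hlow hup
    obtain ⟨hn, hpos, -⟩ := hlow
    have hn' : (0 : ℝ) < n := Nat.cast_pos.2 hn
    rw [neg_mul, neg_le_neg_iff, one_div, inv_mul_le_iff₀ hn', ← log_pow]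
    exact log_le_log hpos hup
  · filter_upwards [hlow'] with n hlow
    obtain ⟨hn, -, hlog⟩ := hlow
    have hn' : (0 : ℝ) < n := Nat.cast_pos.2 hn
    rw [show -(1 / (n : ℝ)) * log (a n) = -log ρ + (n * log ρ - log (a n)) / n by
      field_simp; ring]
    gcongr
    linarith

theorem Fintype.sum_arrow_fin_succ {β M : Type*} [Fintype β] [AddCommMonoid M] {m : ℕ}
    (f : (Fin (m + 1) → β) → M) :
    ∑ x, f x = ∑ a, ∑ y : Fin m → β, f (Matrix.vecCons a y) := by
  rw [← (Fin.consEquiv fun _ => β).sum_comp, Fintype.sum_prod_type]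
  rfl

section ProductMass

variable {α : Type*}

def tilt (P Z : α → ℝ) (t : ℝ) (x : α) : ℝ := P x * exp (t * Z x)

theorem prod_tilt {n : ℕ} (P Z : α → ℝ) (t : ℝ) (σ : Fin n → α) :
    ∏ k, tilt P Z t (σ k) = (∏ k, P (σ k)) * exp (t * ∑ k, Z (σ k)) := by
  simp only [tilt, Finset.prod_mul_distrib, Finset.mul_sum, exp_sum]

variable [Fintype α]

def productMass (P : α → ℝ) (n : ℕ) (A : Set (Fin n → α)) : ℝ :=
  ∑ σ, if σ ∈ A then ∏ k, P (σ k) else 0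

variable {P Z : α → ℝ} {n : ℕ}

theorem productMass_univ (P : α → ℝ) (n : ℕ) :
    productMass P n Set.univ = (∑ x, P x) ^ n := by
  simp [productMass, Fintype.sum_pow]

theorem productMass_mono (hP : 0 ≤ P) {A B : Set (Fin n → α)} (h : A ⊆ B) :
    productMass P n A ≤ productMass P n B := by
  refine Finset.sum_le_sum fun σ _ => ?_
  have : 0 ≤ ∏ k, P (σ k) := Finset.prod_nonneg fun k _ => hP (σ k)
  by_cases hA : σ ∈ A
  · simp [hA, h hA]
  · split_ifs <;> linarith

theorem productMass_le_add_of_subset_union (hP : 0 ≤ P) {A B C : Set (Fin n → α)}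
    (h : A ⊆ B ∪ C) : productMass P n A ≤ productMass P n B + productMass P n C := by
  rw [productMass, productMass, productMass, ← Finset.sum_add_distrib]
  refine Finset.sum_le_sum fun σ _ => ?_
  have : 0 ≤ ∏ k, P (σ k) := Finset.prod_nonneg fun k _ => hP (σ k)
  by_cases hA : σ ∈ A
  · rcases h hA with hB | hC <;> split_ifs <;> linarith
  · split_ifs <;> linarith

theorem productMass_preimage_perm (τ : Equiv.Perm α) (hPτ : ∀ x, P (τ x) = P x)
    (A : Set (Fin n → α)) :
    productMass P n ((fun σ k => τ (σ k)) ⁻¹' A) = productMass P n A :=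
  Fintype.sum_equiv (Equiv.piCongrRight fun _ => τ) _ _ fun σ => by simp [hPτ]; rfl

theorem productMass_le_exp_mul_sum_tilt_pow (hP : 0 ≤ P) {s : ℝ} (hs : 0 ≤ s) (m : ℝ) :
    productMass P n {σ | m ≤ ∑ k, Z (σ k)} ≤ exp (-(s * m)) * (∑ x, tilt P Z s x) ^ n := by
  rw [Fintype.sum_pow, Finset.mul_sum]
  refine Finset.sum_le_sum fun σ _ => ?_
  have hprod : 0 ≤ ∏ k, P (σ k) := Finset.prod_nonneg fun k _ => hP (σ k)
  rw [prod_tilt, ← mul_assoc, mul_comm (exp _), mul_assoc, ← exp_add]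
  split_ifs with h
  · refine le_mul_of_one_le_right hprod (one_le_exp ?_)
    have : m ≤ ∑ k, Z (σ k) := h
    nlinarith
  · positivity

theorem productMass_le_pow_sum_tilt (hP : 0 ≤ P) {t : ℝ} (ht : 0 ≤ t) :
    productMass P n {σ | 0 ≤ ∑ k, Z (σ k)} ≤ (∑ x, tilt P Z t x) ^ n := by
  simpa using productMass_le_exp_mul_sum_tilt_pow hP ht 0 (n := n) (Z := Z)

theorem exp_neg_mul_productMass_tilt_le (hP : 0 ≤ P) {t L : ℝ} (ht : 0 ≤ t)
    {A : Set (Fin n → α)} (hA : ∀ σ ∈ A, ∑ k, Z (σ k) ≤ L) :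
    exp (-(t * L)) * productMass (tilt P Z t) n A ≤ productMass P n A := by
  rw [productMass, productMass, Finset.mul_sum]
  refine Finset.sum_le_sum fun σ _ => ?_
  have hprod : 0 ≤ ∏ k, P (σ k) := Finset.prod_nonneg fun k _ => hP (σ k)
  split_ifs with h
  · rw [prod_tilt, mul_left_comm, ← exp_add]
    refine mul_le_of_le_one_right hprod (exp_le_one_iff.2 ?_)
    nlinarith [hA σ h]
  · rw [mul_zero]

section Symmetric

variable (hP : 0 ≤ P) (τ : Equiv.Perm α) (hPτ : ∀ x, P (τ x) = P x)
  (hZτ : ∀ x, Z (τ x) = -Z x)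
include hP hPτ hZτ

theorem pow_sum_div_two_le_productMass :
    (∑ x, P x) ^ n / 2 ≤ productMass P n {σ | 0 ≤ ∑ k, Z (σ k)} := by
  have hflip : productMass P n {σ | ∑ k, Z (σ k) ≤ 0} =
      productMass P n {σ | 0 ≤ ∑ k, Z (σ k)} := by
    rw [← productMass_preimage_perm τ hPτ]
    congr 1
    ext σ
    simp [hZτ]
  have hcover := productMass_le_add_of_subset_union hP (n := n) (A := Set.univ)
    (B := {σ | 0 ≤ ∑ k, Z (σ k)}) (C := {σ | ∑ k, Z (σ k) ≤ 0})
    fun σ _ => le_total 0 (∑ k, Z (σ k))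
  rw [productMass_univ, hflip] at hcover
  linarith

theorem sum_tilt_le_exp_half_sq_mul_sum (hZ : ∀ x, |Z x| ≤ 1) (s : ℝ) :
    ∑ x, tilt P Z s x ≤ exp (s ^ 2 / 2) * ∑ x, P x := by
  have hflip : ∑ x, tilt P Z s x = ∑ x, P x * exp (-(s * Z x)) := by
    rw [← Equiv.sum_comp τ]
    simp [tilt, hPτ, hZτ]
  have hcosh : ∑ x, tilt P Z s x = ∑ x, P x * cosh (s * Z x) := by
    simp only [cosh_eq, mul_div, mul_add, add_div, Finset.sum_add_distrib, ← Finset.sum_div,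
      ← hflip, tilt]
    ring
  rw [hcosh, Finset.mul_sum]
  refine Finset.sum_le_sum fun x _ => ?_
  rw [mul_comm (exp _)]
  refine mul_le_mul_of_nonneg_left ((cosh_le_cosh.2 ?_).trans (cosh_le_exp_half_sq s)) (hP x)
  rw [abs_mul]
  exact mul_le_of_le_one_right (abs_nonneg s) (hZ x)

theorem productMass_two_mul_sqrt_le_sum_le (hZ : ∀ x, |Z x| ≤ 1) (hn : 0 < n) :
    productMass P n {σ | 2 * √n ≤ ∑ k, Z (σ k)} ≤ (∑ x, P x) ^ n / 4 := by
  have hsqrt : 0 < √(n : ℝ) := sqrt_pos.2 (Nat.cast_pos.2 hn)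
  -- `s = 2 / √n` minimises the Chernoff exponent `-2√n s + n s² / 2`, to the value `-2`
  set s := 2 / √(n : ℝ)
  have hexponent : -(s * (2 * √n)) + n * (s ^ 2 / 2) = -2 := by
    simp only [s]
    rw [div_pow, sq_sqrt (Nat.cast_nonneg n)]
    field_simp
    ring
  have hexp_two : 4 ≤ exp 2 := by
    rw [show (2 : ℝ) = 1 + 1 by norm_num, exp_add]
    nlinarith [exp_one_gt_two]
  calc productMass P n {σ | 2 * √n ≤ ∑ k, Z (σ k)}
      ≤ exp (-(s * (2 * √n))) * (∑ x, tilt P Z s x) ^ n :=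
        productMass_le_exp_mul_sum_tilt_pow hP (by positivity) _
    _ ≤ exp (-(s * (2 * √n))) * (exp (s ^ 2 / 2) * ∑ x, P x) ^ n := by
        gcongr
        · exact Finset.sum_nonneg fun x _ => mul_nonneg (hP x) (exp_pos _).le
        · exact sum_tilt_le_exp_half_sq_mul_sum hP τ hPτ hZτ hZ s
    _ = exp (-2) * (∑ x, P x) ^ n := by
        rw [mul_pow, ← exp_nat_mul, ← mul_assoc, ← exp_add, hexponent]
    _ ≤ 4⁻¹ * (∑ x, P x) ^ n := by
        refine mul_le_mul_of_nonneg_right ?_ (pow_nonneg (Finset.sum_nonneg fun x _ => hP x) n)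
        rw [exp_neg]
        exact inv_anti₀ (by norm_num) hexp_two
    _ = (∑ x, P x) ^ n / 4 := by ring

end Symmetric

theorem pow_sum_tilt_mul_exp_le_productMass (hP : 0 ≤ P) (hZ : ∀ x, |Z x| ≤ 1)
    (τ : Equiv.Perm α) (hZτ : ∀ x, Z (τ x) = -Z x) {t : ℝ} (ht : 0 ≤ t)
    (hTτ : ∀ x, tilt P Z t (τ x) = tilt P Z t x) (hn : 0 < n) :
    (∑ x, tilt P Z t x) ^ n * exp (-(2 * t * √n + log 4)) ≤
      productMass P n {σ | 0 ≤ ∑ k, Z (σ k)} := by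
  set T := tilt P Z t
  set ρ := ∑ x, T x
  set L := 2 * √(n : ℝ)
  have hT : 0 ≤ T := fun x => mul_nonneg (hP x) (exp_pos _).le
  have half := pow_sum_div_two_le_productMass hT τ hTτ hZτ (n := n)
  have tail := productMass_two_mul_sqrt_le_sum_le hT τ hTτ hZτ hZ hn
  have cover := productMass_le_add_of_subset_union hT (n := n) (A := {σ | 0 ≤ ∑ k, Z (σ k)})
    (B := {σ | ∑ k, Z (σ k) ∈ Set.Icc 0 L}) (C := {σ | L ≤ ∑ k, Z (σ k)})
    fun σ h => (le_total (∑ k, Z (σ k)) L).imp (fun h' => ⟨h, h'⟩) id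
  have hL : exp (-(2 * t * √n + log 4)) = exp (-(t * L)) / 4 := by
    rw [show 2 * t * √(n : ℝ) = t * L by ring, neg_add, exp_add, exp_neg (log 4),
      exp_log (by norm_num)]
    ring
  calc ρ ^ n * exp (-(2 * t * √n + log 4))
      = exp (-(t * L)) * (ρ ^ n / 2 - ρ ^ n / 4) := by rw [hL]; ring
    _ ≤ exp (-(t * L)) * productMass T n {σ | ∑ k, Z (σ k) ∈ Set.Icc 0 L} := by
        gcongr
        linarith
    _ ≤ productMass P n {σ | ∑ k, Z (σ k) ∈ Set.Icc 0 L} :=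
        exp_neg_mul_productMass_tilt_le hP ht fun σ h => h.2
    _ ≤ productMass P n {σ | 0 ≤ ∑ k, Z (σ k)} := productMass_mono hP fun σ h => h.1

theorem tendsto_neg_inv_mul_log_productMass (hP : 0 ≤ P) (hZ : ∀ x, |Z x| ≤ 1)
    (τ : Equiv.Perm α) (hZτ : ∀ x, Z (τ x) = -Z x) {t : ℝ} (ht : 0 ≤ t)
    (hTτ : ∀ x, tilt P Z t (τ x) = tilt P Z t x) (hρ : 0 < ∑ x, tilt P Z t x) :
    Tendsto (fun n : ℕ => -(1 / (n : ℝ)) * log (productMass P n {σ | 0 ≤ ∑ k, Z (σ k)}))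
      atTop (𝓝 (-log (∑ x, tilt P Z t x))) := by
  refine tendsto_neg_inv_mul_log_of_pow_bounds hρ (g := fun n => 2 * t * √n + log 4) ?_
    ?_ (.of_forall fun n => productMass_le_pow_sum_tilt hP ht)
  · have hsqrt : Tendsto (fun n : ℕ => (√(n : ℝ))⁻¹) atTop (𝓝 0) :=
      tendsto_inv_atTop_zero.comp (tendsto_sqrt_atTop.comp tendsto_natCast_atTop_atTop)
    have hinv : Tendsto (fun n : ℕ => (n : ℝ)⁻¹) atTop (𝓝 0) :=
      tendsto_inv_atTop_zero.comp tendsto_natCast_atTop_atTop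
    convert (hsqrt.const_mul (2 * t)).add (hinv.const_mul (log 4)) using 2 with n
    · rw [add_div, mul_div_assoc, sqrt_div_self', one_div, div_eq_mul_inv]
    · simp
  · filter_upwards [eventually_gt_atTop 0] with n hn
    exact pow_sum_tilt_mul_exp_le_productMass hP hZ τ hZτ ht hTτ hn

end ProductMass

section ChainCrossover

def agreementGap (x : Fin 3 → Bool) : ℝ :=
  (if x 0 = x 2 then 1 else 0) - (if x 0 = x 1 then 1 else 0)

def swapLeaves : Equiv.Perm (Fin 3 → Bool) :=
  Function.Involutive.toPerm (fun x => ![x 0, x 2, x 1]) fun x => by ext i; fin_cases i <;> rfl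

theorem swapLeaves_apply (x : Fin 3 → Bool) : swapLeaves x = ![x 0, x 2, x 1] :=
  rfl

theorem iidProb_eq_productMass {p n : ℕ} (P : (Fin p → Bool) → ℝ)
    (A : Set (Fin n → Fin p → Bool)) : iidProb P n A = productMass P n A :=
  rfl

theorem setOf_Ahat_le_Ahat_eq {n : ℕ} (hn : 0 < n) :
    {xs : Fin n → Fin 3 → Bool | Ahat xs 0 1 ≤ Ahat xs 0 2} =
      {xs | 0 ≤ ∑ k, agreementGap (xs k)} := by
  ext xs
  simp only [Set.mem_ofPred_eq, Ahat, agreementGap, Finset.sum_sub_distrib, Finset.sum_boole,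
    sub_nonneg, div_le_div_iff_of_pos_right (Nat.cast_pos.2 hn : (0 : ℝ) < n)]

theorem abs_agreementGap_le_one (x : Fin 3 → Bool) : |agreementGap x| ≤ 1 := by
  unfold agreementGap
  split_ifs <;> norm_num

theorem agreementGap_swapLeaves (x : Fin 3 → Bool) :
    agreementGap (swapLeaves x) = -agreementGap x := by
  change (if x 0 = x 1 then (1 : ℝ) else 0) - (if x 0 = x 2 then 1 else 0) = -agreementGap x
  rw [agreementGap]
  ring

theorem Ptilde_nonneg {θ₁ θ₃ : ℝ} (h₁ : 0 ≤ θ₁) (h₁' : θ₁ ≤ 1) (h₃ : 0 ≤ θ₃) (h₃' : θ₃ ≤ 1) :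
    0 ≤ Ptilde θ₁ θ₃ := fun x => by
  unfold Ptilde
  split_ifs <;> positivity

theorem sum_tilt_Ptilde (θ₁ θ₃ t : ℝ) :
    ∑ x, tilt (Ptilde θ₁ θ₃) agreementGap t x =
      1 - θ₃ + θ₃ * (θ₁ * exp t + (1 - θ₁) * exp (-t)) := by
  simp only [Fintype.sum_arrow_fin_succ, Fintype.sum_bool, Fintype.sum_unique]
  simp [tilt, Ptilde, agreementGap]
  ring

theorem tilt_Ptilde_swapLeaves {θ₁ θ₃ t : ℝ} (h : θ₁ * exp t = (1 - θ₁) * exp (-t))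
    (x : Fin 3 → Bool) :
    tilt (Ptilde θ₁ θ₃) agreementGap t (swapLeaves x) = tilt (Ptilde θ₁ θ₃) agreementGap t x := by
  cases h0 : x 0 <;> cases h1 : x 1 <;> cases h2 : x 2 <;>
    simp [tilt, Ptilde, agreementGap, swapLeaves_apply, h0, h1, h2] <;>
    linarith [congrArg (· * θ₃) h]

theorem mul_sqrt_odds {θ : ℝ} (h0 : 0 < θ) (h1 : θ < 1) :
    θ * √((1 - θ) / θ) = (1 - θ) * (√((1 - θ) / θ))⁻¹ := by
  have hq : 0 < (1 - θ) / θ := div_pos (by linarith) h0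
  rw [eq_mul_inv_iff_mul_eq₀ (sqrt_pos.2 hq).ne', mul_assoc, mul_self_sqrt hq.le]
  field_simp

theorem two_mul_mul_sqrt_odds {θ : ℝ} (h0 : 0 < θ) (h1 : θ < 1) :
    2 * (θ * √((1 - θ) / θ)) = √(4 * θ * (1 - θ)) := by
  have hq : 0 ≤ (1 - θ) / θ := div_nonneg (by linarith) h0.le
  rw [eq_comm, sqrt_eq_iff_mul_self_eq_of_pos (by positivity)]
  have : θ * (√((1 - θ) / θ) * √((1 - θ) / θ)) = 1 - θ := by
    rw [mul_self_sqrt hq]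
    field_simp
  linear_combination (4 * θ) * this

end ChainCrossover

end

/-- error exponent of the crossover event `Â_{1,3} ≥ Â_{1,2}` for the
3-node chain with edge parameters `θ₁, θ₃`. -/
theorem stmt4 (θ₁ θ₃ : ℝ) (hθ₁0 : 0 < θ₁) (hθ₁1 : θ₁ < 1 / 2)
    (hθ₃0 : 0 < θ₃) (hθ₃1 : θ₃ < 1 / 2) :
    Filter.Tendsto (fun n : ℕ =>
      -(1 / (n : ℝ)) * Real.log (iidProb (Ptilde θ₁ θ₃) n
        {xs | Ahat xs 0 1 ≤ Ahat xs 0 2}))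
      Filter.atTop
      (nhds (-Real.log (1 - θ₃ * (1 - Real.sqrt (4 * θ₁ * (1 - θ₁)))))) := by
  set r := √((1 - θ₁) / θ₁)
  have hr : 1 ≤ r := one_le_sqrt.2 (by rw [le_div_iff₀ hθ₁0]; linarith)
  have hbalance : θ₁ * exp (log r) = (1 - θ₁) * exp (-log r) := by
    rw [exp_neg, exp_log (by positivity)]
    exact mul_sqrt_odds hθ₁0 (by linarith)
  have hρ : ∑ x, tilt (Ptilde θ₁ θ₃) agreementGap (log r) x =
      1 - θ₃ * (1 - √(4 * θ₁ * (1 - θ₁))) := by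
    rw [sum_tilt_Ptilde, ← hbalance, exp_log (by positivity),
      ← two_mul_mul_sqrt_odds hθ₁0 (by linarith)]
    ring
  have hρ_pos : 0 < 1 - θ₃ * (1 - √(4 * θ₁ * (1 - θ₁))) := by
    nlinarith [sqrt_nonneg (4 * θ₁ * (1 - θ₁))]
  have key := tendsto_neg_inv_mul_log_productMass
    (Ptilde_nonneg hθ₁0.le (by linarith) hθ₃0.le (by linarith)) abs_agreementGap_le_one
    swapLeaves agreementGap_swapLeaves (log_nonneg hr) (tilt_Ptilde_swapLeaves hbalance)
    (hρ ▸ hρ_pos)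
  rw [hρ] at key
  refine key.congr' ?_
  filter_upwards [eventually_gt_atTop 0] with n hn
  rw [iidProb_eq_productMass, setOf_Ahat_le_Ahat_eq hn]
end

section
/- Let θ ∈ (0, 1/2) and let P = P_{T,θ} on {0,1}³ for the tree T with edge set {{1,2},{2,3}}. For a probability mass function Q on {0,1}³, let Q_{i,j} denote its marginal on coordinates (i,j), Q_i its marginal on coordinate i, and define the mutual information I(Q_{i,j}) := D(Q_{i,j} ‖ Q_i ⊗ Q_j), where Q_i ⊗ Q_j denotes the product of the marginals. Then the Chow–Liu error exponent satisfies min{ D(Q‖P) : Q a probability mass function on {0,1}³ with I(Q_{1,2}) ≤ I(Q_{1,3}) } = −log(1 − θ·(1 − √(4θ(1−θ)))). -/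
open scoped Classical BigOperators
open Filter

/-!
Write `U = X₀ ⊕ X₁`, `V = X₁ ⊕ X₂` and `W = X₀ ⊕ X₂ = U ⊕ V`. Under `P` the bit `X₀` is uniform
and independent of the increments `(U, V)`, which are i.i.d. Bernoulli(θ).

Lower bound (weak duality): for a multiplier `c ∈ [0, 1]`, subadditivity, submodularity and
`H ≤ log 2` give `D(Q‖P) + c (I(Q₀₁) - I(Q₀₂)) ≥ D(Q_{UV}‖P_{UV}) + c (H(W) - H(U))`, a problem
about the law of the increments alone. Let `g ∝ P_{UV} e^{t (1[U] - 1[W])}` with normalizer `Z`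
and `e^{2t} = (1 - θ)/θ`. Then `D(Q_{UV}‖P_{UV}) = D(Q_{UV}‖g) + t (Q[U] - Q[W]) - log Z`, data
processing along `(U, V) ↦ W` bounds `D(Q_{UV}‖g)` below by `D(Q_W‖g_W)`, and `c` is chosen so
that the linear terms of the two Bernoulli entropies cancel `t (Q[U] - Q[W])`; what is left is
`-log Z` plus nonnegative divergences.

Attainment: lifting `g` to `{0,1}³` with uniform `X₀` gives a law with divergence `-log Z`,
invariant under swapping `X₁` and `X₂`, so that its two mutual informations agree.
-/

noncomputable section

open Real Finset

section Entropy

variable {α α' β γ : Type*} [Fintype α] [DecidableEq β] [DecidableEq γ]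

def pushforward (f : α → β) (Q : α → ℝ) (b : β) : ℝ := ∑ a with f a = b, Q a

def entropy (Q : α → ℝ) : ℝ := ∑ a, negMulLog (Q a)

lemma sum_pushforward_mul [Fintype β] (f : α → β) (Q : α → ℝ) (G : β → ℝ) :
    ∑ b, pushforward f Q b * G b = ∑ a, Q a * G (f a) := by
  simp_rw [pushforward, sum_mul]
  rw [← sum_fiberwise univ f fun a => Q a * G (f a)]
  refine sum_congr rfl fun b _ => sum_congr rfl fun a ha => ?_
  rw [(mem_filter.1 ha).2]

lemma sum_pushforward [Fintype β] (f : α → β) (Q : α → ℝ) :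
    ∑ b, pushforward f Q b = ∑ a, Q a := by
  simpa using sum_pushforward_mul f Q 1

lemma pushforward_nonneg {Q : α → ℝ} (hQ : ∀ a, 0 ≤ Q a) (f : α → β) (b : β) :
    0 ≤ pushforward f Q b :=
  sum_nonneg fun a _ => hQ a

lemma le_pushforward_apply {Q : α → ℝ} (hQ : ∀ a, 0 ≤ Q a) (f : α → β) (a : α) :
    Q a ≤ pushforward f Q (f a) :=
  single_le_sum (fun a _ => hQ a) (by simp)

lemma pushforward_id [DecidableEq α] (Q : α → ℝ) : pushforward id Q = Q := by
  ext a
  simp [pushforward, sum_filter]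

lemma pushforward_pushforward [Fintype β] (g : β → γ) (f : α → β) (Q : α → ℝ) :
    pushforward g (pushforward f Q) = pushforward (g ∘ f) Q := by
  ext c
  simp only [pushforward, Function.comp_apply]
  rw [← sum_fiberwise_of_maps_to (g := f) (t := univ.filter fun b => g b = c)
    (fun a ha => by simpa using ha)]
  refine sum_congr rfl fun b hb => sum_congr ?_ fun _ _ => rfl
  ext a
  simp only [mem_filter, mem_univ, true_and] at hb ⊢
  exact ⟨fun h => ⟨h ▸ hb, h⟩, And.right⟩

lemma pushforward_comp_equiv [Fintype α'] (f : α' → β) (Q : α → ℝ) (e : α' ≃ α) :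
    pushforward f (Q ∘ e) = pushforward (f ∘ e.symm) Q := by
  ext b
  exact sum_equiv e (by simp) (by simp)

lemma sum_mul_log_eq_neg_entropy (Q : α → ℝ) : ∑ a, Q a * log (Q a) = -entropy Q := by
  simp [entropy, negMulLog, ← sum_neg_distrib]

lemma sum_mul_log_pushforward [Fintype β] (f : α → β) (Q : α → ℝ) :
    ∑ a, Q a * log (pushforward f Q (f a)) = -entropy (pushforward f Q) := by
  rw [← sum_pushforward_mul f Q fun b => log (pushforward f Q b), sum_mul_log_eq_neg_entropy]

lemma sub_le_mul_log_div {p q : ℝ} (hp : 0 ≤ p) (hq : 0 ≤ q) (hpq : q = 0 → p = 0) :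
    p - q ≤ p * log (p / q) := by
  rcases hp.eq_or_lt with rfl | hp
  · simpa using hq
  have hq : 0 < q := hq.lt_of_ne fun h => hp.ne' (hpq h.symm)
  have := mul_le_mul_of_nonneg_left (one_sub_inv_le_log_of_pos (div_pos hp hq)) hp.le
  rwa [inv_div, mul_sub, mul_one, mul_div_cancel₀ _ hp.ne'] at this

lemma sum_sub_sum_le_sum_mul_log_div {ι : Type*} (s : Finset ι) {p q : ι → ℝ}
    (hp : ∀ i ∈ s, 0 ≤ p i) (hq : ∀ i ∈ s, 0 ≤ q i) (hpq : ∀ i ∈ s, q i = 0 → p i = 0) :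
    ∑ i ∈ s, p i - ∑ i ∈ s, q i ≤ ∑ i ∈ s, p i * log (p i / q i) := by
  rw [← sum_sub_distrib]
  exact sum_le_sum fun i hi => sub_le_mul_log_div (hp i hi) (hq i hi) (hpq i hi)

lemma klDiv_nonneg {Q R : α → ℝ} (hQ : ∀ a, 0 ≤ Q a) (hR : ∀ a, 0 ≤ R a)
    (hRQ : ∀ a, R a = 0 → Q a = 0) (hsum : ∑ a, R a ≤ ∑ a, Q a) : 0 ≤ klDiv Q R :=
  (sub_nonneg.2 hsum).trans <|
    sum_sub_sum_le_sum_mul_log_div _ (fun a _ => hQ a) (fun a _ => hR a) fun a _ => hRQ a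

lemma sum_mul_log_div_sum_le {ι : Type*} (s : Finset ι) {p q : ι → ℝ}
    (hp : ∀ i ∈ s, 0 ≤ p i) (hq : ∀ i ∈ s, 0 ≤ q i) (hpq : ∀ i ∈ s, q i = 0 → p i = 0) :
    (∑ i ∈ s, p i) * log ((∑ i ∈ s, p i) / ∑ i ∈ s, q i) ≤ ∑ i ∈ s, p i * log (p i / q i) := by
  rcases (sum_nonneg hq).eq_or_lt with hB | hB
  · have hq0 := (sum_eq_zero_iff_of_nonneg hq).1 hB.symm
    rw [← hB, div_zero, log_zero, mul_zero]
    exact sum_nonneg fun i hi => by simp [hpq i hi (hq0 i hi)]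
  rcases (sum_nonneg hp).eq_or_lt with hA | hA
  · have hp0 := (sum_eq_zero_iff_of_nonneg hp).1 hA.symm
    rw [← hA, zero_mul]
    exact sum_nonneg fun i hi => by simp [hp0 i hi]
  set c := (∑ i ∈ s, p i) / ∑ i ∈ s, q i with hc_def
  have hc : 0 < c := div_pos hA hB
  -- Gibbs' inequality against `q` rescaled to the total mass of `p`
  have key := sum_sub_sum_le_sum_mul_log_div s (q := fun i => q i * c) hp
    (fun i hi => mul_nonneg (hq i hi) hc.le)
    (fun i hi h => hpq i hi ((mul_eq_zero.1 h).resolve_right hc.ne'))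
  have hsplit : ∀ i ∈ s, p i * log (p i / (q i * c)) = p i * log (p i / q i) - p i * log c := by
    intro i hi
    rcases (hp i hi).eq_or_lt with h | h
    · simp [← h]
    have hqi : q i ≠ 0 := fun h0 => h.ne' (hpq i hi h0)
    rw [← div_div, log_div (div_ne_zero h.ne' hqi) hc.ne', mul_sub]
  have hcq : (∑ i ∈ s, q i) * c = ∑ i ∈ s, p i := by rw [hc_def]; field_simp
  rw [sum_congr rfl hsplit, sum_sub_distrib, ← sum_mul, ← sum_mul, hcq, sub_self] at key
  linarith

lemma klDiv_pushforward_le [Fintype β] {Q R : α → ℝ} (hQ : ∀ a, 0 ≤ Q a)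
    (hR : ∀ a, 0 ≤ R a) (hRQ : ∀ a, R a = 0 → Q a = 0) (f : α → β) :
    klDiv (pushforward f Q) (pushforward f R) ≤ klDiv Q R := by
  rw [klDiv, klDiv, ← sum_fiberwise univ f]
  exact sum_le_sum fun b _ => sum_mul_log_div_sum_le _ (fun a _ => hQ a) (fun a _ => hR a)
    fun a _ => hRQ a

lemma klDiv_eq_neg_entropy_sub {Q R : α → ℝ} (hQ : ∀ a, 0 ≤ Q a) (hR : ∀ a, 0 < R a) :
    klDiv Q R = -entropy Q - ∑ a, Q a * log (R a) := by
  rw [klDiv, entropy, ← sum_neg_distrib, ← sum_sub_distrib]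
  refine sum_congr rfl fun a _ => ?_
  rcases (hQ a).eq_or_lt with h | h
  · simp [← h]
  rw [log_div h.ne' (hR a).ne', negMulLog]
  ring

lemma entropy_le_log_card {Q : α → ℝ} (hQ : ∀ a, 0 ≤ Q a) (hQ1 : ∑ a, Q a = 1) :
    entropy Q ≤ log (Fintype.card α) := by
  have hα : (0 : ℝ) < Fintype.card α := by
    have : Nonempty α := by
      by_contra h
      rw [not_nonempty_iff] at h
      simp at hQ1
    exact_mod_cast Fintype.card_pos
  have := klDiv_nonneg hQ (R := fun _ => (Fintype.card α : ℝ)⁻¹) (fun _ => by positivity)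
    (fun _ h => absurd h (by positivity)) (by simp [hQ1, hα.ne'])
  rw [klDiv_eq_neg_entropy_sub hQ fun _ => by positivity, ← sum_mul, hQ1, log_inv] at this
  linarith

lemma negMulLog_sum_le {ι : Type*} (s : Finset ι) {p : ι → ℝ} (hp : ∀ i ∈ s, 0 ≤ p i) :
    negMulLog (∑ i ∈ s, p i) ≤ ∑ i ∈ s, negMulLog (p i) := by
  simp only [negMulLog, neg_mul, sum_mul, ← sum_neg_distrib]
  refine sum_le_sum fun i hi => neg_le_neg ?_
  rcases (hp i hi).eq_or_lt with h | h
  · simp [← h]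
  exact mul_le_mul_of_nonneg_left (log_le_log h (single_le_sum hp hi)) h.le

lemma entropy_pushforward_le [Fintype β] {Q : α → ℝ} (hQ : ∀ a, 0 ≤ Q a) (f : α → β) :
    entropy (pushforward f Q) ≤ entropy Q := by
  rw [entropy, entropy, ← sum_fiberwise univ f]
  exact sum_le_sum fun b _ => negMulLog_sum_le _ fun a _ => hQ a

lemma entropy_pushforward_le_of_comp [Fintype β] [Fintype γ] {Q : α → ℝ}
    (hQ : ∀ a, 0 ≤ Q a) {f : α → β} {g : α → γ} (e : β → γ) (he : ∀ a, g a = e (f a)) :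
    entropy (pushforward g Q) ≤ entropy (pushforward f Q) := by
  rw [show g = e ∘ f from funext he, ← pushforward_pushforward]
  exact entropy_pushforward_le (pushforward_nonneg hQ f) e

lemma entropy_le_log_two {Q : α → ℝ} (hQ : ∀ a, 0 ≤ Q a) (hQ1 : ∑ a, Q a = 1) (f : α → Bool) :
    entropy (pushforward f Q) ≤ log 2 := by
  simpa using entropy_le_log_card (pushforward_nonneg hQ f) ((sum_pushforward f Q).trans hQ1)

end Entropy

section Coupling

variable {β γ δ : Type*} [DecidableEq δ]

def condIndepCoupling (k₁ : β → δ) (k₂ : γ → δ) (Qf : β → ℝ) (Qg : γ → ℝ) (Qk : δ → ℝ)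
    (x : β × γ) : ℝ :=
  if k₁ x.1 = k₂ x.2 then Qf x.1 * Qg x.2 / Qk (k₁ x.1) else 0

lemma sum_condIndepCoupling [Fintype β] [Fintype γ] {k₁ : β → δ} {k₂ : γ → δ} {Qf : β → ℝ}
    {Qg : γ → ℝ} {Qk : δ → ℝ} (hQf : ∀ b, 0 ≤ Qf b) (h₁ : pushforward k₁ Qf = Qk)
    (h₂ : pushforward k₂ Qg = Qk) :
    ∑ x, condIndepCoupling k₁ k₂ Qf Qg Qk x = ∑ b, Qf b := by
  rw [Fintype.sum_prod_type]
  refine sum_congr rfl fun b _ => ?_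
  simp only [condIndepCoupling, eq_comm (a := k₁ b)]
  rw [← sum_filter, ← sum_div, ← mul_sum]
  change Qf b * pushforward k₂ Qg (k₁ b) / Qk (k₁ b) = Qf b
  rw [h₂]
  refine mul_div_cancel_of_imp fun h => le_antisymm ?_ (hQf b)
  exact h ▸ h₁ ▸ le_pushforward_apply hQf k₁ b

end Coupling

section Submodularity

variable {α β γ δ : Type*} [Fintype α] [DecidableEq β] [DecidableEq γ] [DecidableEq δ]

/-- Submodularity of entropy, `I(f; g | k) ≥ 0` for a common coarsening `k` of `f` and `g`. -/
theorem entropy_pair_add_entropy_le [Fintype β] [Fintype γ] [Fintype δ] {Q : α → ℝ}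
    (hQ : ∀ a, 0 ≤ Q a) (f : α → β) (g : α → γ) {k₁ : β → δ} {k₂ : γ → δ}
    (hk : ∀ a, k₁ (f a) = k₂ (g a)) :
    entropy (pushforward (fun a => (f a, g a)) Q) + entropy (pushforward (k₁ ∘ f) Q) ≤
      entropy (pushforward f Q) + entropy (pushforward g Q) := by
  set F := pushforward (fun a => (f a, g a)) Q
  set Qf := pushforward f Q
  set Qg := pushforward g Q
  set Qk := pushforward (k₁ ∘ f) Q
  have hF0 : ∀ x, 0 ≤ F x := pushforward_nonneg hQ _
  have hFf : pushforward Prod.fst F = Qf := pushforward_pushforward _ _ _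
  have hFg : pushforward Prod.snd F = Qg := pushforward_pushforward _ _ _
  have hFk : pushforward (k₁ ∘ Prod.fst) F = Qk := pushforward_pushforward _ _ _
  have hgk : pushforward k₂ Qg = Qk := by
    rw [pushforward_pushforward]; congr 1; funext a; exact (hk a).symm
  have hsupp : ∀ x, 0 < F x → k₁ x.1 = k₂ x.2 ∧ 0 < Qf x.1 ∧ 0 < Qg x.2 ∧ 0 < Qk (k₁ x.1) := by
    intro x hx
    obtain ⟨a, ha, -⟩ := exists_ne_zero_of_sum_ne_zero hx.ne'
    obtain rfl := (mem_filter.1 ha).2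
    exact ⟨hk a, hx.trans_le (hFf ▸ le_pushforward_apply hF0 Prod.fst _),
      hx.trans_le (hFg ▸ le_pushforward_apply hF0 Prod.snd _),
      hx.trans_le (hFk ▸ le_pushforward_apply hF0 (k₁ ∘ Prod.fst) _)⟩
  set S := condIndepCoupling k₁ k₂ Qf Qg Qk
  have hS0 : ∀ x, 0 ≤ S x := fun x => by
    unfold S condIndepCoupling
    split_ifs
    · exact div_nonneg (mul_nonneg (pushforward_nonneg hQ _ _) (pushforward_nonneg hQ _ _))
        (pushforward_nonneg hQ _ _)
    · exact le_rfl
  have hlog : ∀ x, F x * log (F x / S x) = F x * log (F x) - F x * log (Qf x.1) -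
      F x * log (Qg x.2) + F x * log (Qk ((k₁ ∘ Prod.fst) x)) := fun x => by
    rcases (hF0 x).eq_or_lt with h | h
    · simp [← h]
    obtain ⟨hk', hf, hg, hkpos⟩ := hsupp x h
    simp only [S, condIndepCoupling, if_pos hk', Function.comp_apply]
    rw [log_div h.ne' (div_pos (mul_pos hf hg) hkpos).ne', log_div (mul_pos hf hg).ne' hkpos.ne',
      log_mul hf.ne' hg.ne']
    ring
  have hkl := klDiv_nonneg hF0 hS0
    (fun x hx => ((hF0 x).eq_or_lt.resolve_right fun hpos => by
      obtain ⟨hk', hf, hg, hkpos⟩ := hsupp x hpos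
      simp only [S, condIndepCoupling, if_pos hk'] at hx
      exact (div_pos (mul_pos hf hg) hkpos).ne' hx).symm)
    ((sum_condIndepCoupling (pushforward_nonneg hQ f) (pushforward_pushforward _ _ _) hgk).trans
      (by rw [sum_pushforward, sum_pushforward])).le
  rw [klDiv, sum_congr rfl fun x _ => hlog x, sum_add_distrib, sum_sub_distrib, sum_sub_distrib,
    sum_mul_log_eq_neg_entropy, ← hFf, ← hFg, ← hFk, sum_mul_log_pushforward Prod.fst F,
    sum_mul_log_pushforward Prod.snd F, sum_mul_log_pushforward (k₁ ∘ Prod.fst) F,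
    hFf, hFg, hFk] at hkl
  linarith

lemma entropy_pair_le [Fintype β] [Fintype γ] {Q : α → ℝ} (hQ : ∀ a, 0 ≤ Q a)
    (hQ1 : ∑ a, Q a = 1) (f : α → β) (g : α → γ) :
    entropy (pushforward (fun a => (f a, g a)) Q) ≤
      entropy (pushforward f Q) + entropy (pushforward g Q) := by
  have h := entropy_pair_add_entropy_le hQ f g (k₁ := fun _ => ()) (k₂ := fun _ => ())
    fun _ => rfl
  have h0 : entropy (pushforward ((fun _ => ()) ∘ f) Q) = 0 := by
    simp [entropy, pushforward, hQ1]
  linarith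

lemma sum_mul_log_div_mul_eq [Fintype β] [Fintype γ] {Q : α → ℝ} (hQ : ∀ a, 0 ≤ Q a)
    (f : α → β) (g : α → γ) :
    ∑ x, pushforward (fun a => (f a, g a)) Q x *
        log (pushforward (fun a => (f a, g a)) Q x / (pushforward f Q x.1 * pushforward g Q x.2)) =
      entropy (pushforward f Q) + entropy (pushforward g Q) -
        entropy (pushforward (fun a => (f a, g a)) Q) := by
  set F := pushforward (fun a => (f a, g a)) Q
  have hF0 : ∀ x, 0 ≤ F x := pushforward_nonneg hQ _
  have hFf : pushforward Prod.fst F = pushforward f Q := pushforward_pushforward _ _ _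
  have hFg : pushforward Prod.snd F = pushforward g Q := pushforward_pushforward _ _ _
  have hlog : ∀ x, F x * log (F x / (pushforward f Q x.1 * pushforward g Q x.2)) =
      F x * log (F x) - F x * log (pushforward f Q x.1) - F x * log (pushforward g Q x.2) := by
    intro x
    rcases (hF0 x).eq_or_lt with h | h
    · simp [← h]
    have hf := h.trans_le (hFf ▸ le_pushforward_apply hF0 Prod.fst x)
    have hg := h.trans_le (hFg ▸ le_pushforward_apply hF0 Prod.snd x)
    rw [log_div h.ne' (mul_pos hf hg).ne', log_mul hf.ne' hg.ne']
    ring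
  rw [sum_congr rfl fun x _ => hlog x, sum_sub_distrib, sum_sub_distrib,
    sum_mul_log_eq_neg_entropy, ← hFf, ← hFg, sum_mul_log_pushforward Prod.fst F,
    sum_mul_log_pushforward Prod.snd F]
  ring

end Submodularity

lemma mutInf_eq_entropy {p : ℕ} {Q : (Fin p → Bool) → ℝ} (hQ : ∀ x, 0 ≤ Q x) (i j : Fin p) :
    mutInf Q i j = entropy (pushforward (· i) Q) + entropy (pushforward (· j) Q) -
      entropy (pushforward (fun x => (x i, x j)) Q) := by
  have h2 : ∀ a b, marg2 Q i j a b = pushforward (fun x => (x i, x j)) Q (a, b) := by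
    intro a b
    simp [marg2, pushforward, Prod.ext_iff]
  rw [← sum_mul_log_div_mul_eq hQ, Fintype.sum_prod_type, mutInf]
  simp only [h2]
  rfl

lemma mutInf_comp_perm {p : ℕ} {Q : (Fin p → Bool) → ℝ} (hQ : ∀ x, 0 ≤ Q x)
    (σ : Equiv.Perm (Fin p)) (i j : Fin p) :
    mutInf (Q ∘ σ.arrowCongr (Equiv.refl Bool)) i j = mutInf Q (σ i) (σ j) := by
  have hQσ : ∀ x, 0 ≤ (Q ∘ σ.arrowCongr (Equiv.refl Bool)) x := fun x => hQ _
  rw [mutInf_eq_entropy hQσ, mutInf_eq_entropy hQ, pushforward_comp_equiv,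
    pushforward_comp_equiv, pushforward_comp_equiv]
  simp [Function.comp_def]

def increments (x : Fin 3 → Bool) : Bool × Bool := (xor (x 0) (x 1), xor (x 1) (x 2))

def liftIncrements (G : Bool × Bool → ℝ) (x : Fin 3 → Bool) : ℝ := G (increments x) / 2

lemma card_filter_increments_eq (y : Bool × Bool) :
    (univ.filter fun x : Fin 3 → Bool => increments x = y).card = 2 := by
  revert y
  decide

lemma pushforward_increments_liftIncrements (G : Bool × Bool → ℝ) :
    pushforward increments (liftIncrements G) = G := by
  ext y
  rw [pushforward, sum_congr rfl fun x hx => by rw [liftIncrements, (mem_filter.1 hx).2],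
    sum_const, card_filter_increments_eq, nsmul_eq_mul]
  ring

lemma sum_liftIncrements (G : Bool × Bool → ℝ) : ∑ x, liftIncrements G x = ∑ y, G y := by
  rw [← sum_pushforward increments, pushforward_increments_liftIncrements]

lemma klDiv_liftIncrements (G R : Bool × Bool → ℝ) :
    klDiv (liftIncrements G) (liftIncrements R) = klDiv G R := by
  calc klDiv (liftIncrements G) (liftIncrements R)
      = ∑ x, liftIncrements G x * log (G (increments x) / R (increments x)) := by
        simp only [klDiv, liftIncrements, div_div_div_cancel_right₀ (two_ne_zero' ℝ)]
    _ = ∑ y, pushforward increments (liftIncrements G) y * log (G y / R y) :=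
        (sum_pushforward_mul _ _ fun y => log (G y / R y)).symm
    _ = klDiv G R := by rw [pushforward_increments_liftIncrements, klDiv]

lemma liftIncrements_comp_swap {G : Bool × Bool → ℝ} (hG : G (false, true) = G (true, true)) :
    liftIncrements G ∘ (Equiv.swap (1 : Fin 3) 2).arrowCongr (Equiv.refl Bool) =
      liftIncrements G := by
  funext x
  have h0 : Equiv.swap (1 : Fin 3) 2 0 = 0 := rfl
  simp only [Function.comp_apply, liftIncrements, increments, Equiv.arrowCongr_apply,
    Equiv.coe_refl, Equiv.symm_swap, h0, Equiv.swap_apply_left, Equiv.swap_apply_right]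
  cases x 0 <;> cases x 1 <;> cases x 2 <;> simp [hG]

lemma mutInf_liftIncrements {G : Bool × Bool → ℝ} (hG0 : ∀ y, 0 ≤ G y)
    (hG : G (false, true) = G (true, true)) :
    mutInf (liftIncrements G) 0 1 = mutInf (liftIncrements G) 0 2 := by
  have hQ : ∀ x, 0 ≤ liftIncrements G x := fun x => div_nonneg (hG0 _) zero_le_two
  have h := mutInf_comp_perm hQ (Equiv.swap (1 : Fin 3) 2) 0 1
  rw [liftIncrements_comp_swap hG] at h
  simpa [Equiv.swap_apply_of_ne_of_ne] using h

theorem klDiv_increments_add_le {Q : (Fin 3 → Bool) → ℝ} (hQ : ∀ x, 0 ≤ Q x)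
    (hQ1 : ∑ x, Q x = 1) {R : Bool × Bool → ℝ} (hR : ∀ y, 0 < R y) {c : ℝ} (hc0 : 0 ≤ c)
    (hc1 : c ≤ 1) :
    klDiv (pushforward increments Q) R +
        c * (entropy (pushforward (fun y => xor y.1 y.2) (pushforward increments Q)) -
          entropy (pushforward Prod.fst (pushforward increments Q))) ≤
      klDiv Q (liftIncrements R) + c * (mutInf Q 0 1 - mutInf Q 0 2) := by
  set q := pushforward increments Q
  have hW : pushforward (fun y => xor y.1 y.2) q = pushforward (fun x => xor (x 0) (x 2)) Q := by
    rw [pushforward_pushforward]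
    congr 1
    funext x
    simp only [Function.comp_apply, increments]
    cases x 0 <;> cases x 1 <;> cases x 2 <;> rfl
  have hU : pushforward Prod.fst q = pushforward (fun x => xor (x 0) (x 1)) Q :=
    pushforward_pushforward _ _ _
  have hD : klDiv Q (liftIncrements R) = klDiv q R + log 2 - entropy Q + entropy q := by
    rw [klDiv_eq_neg_entropy_sub hQ (R := liftIncrements R) fun x => half_pos (hR _),
      klDiv_eq_neg_entropy_sub (pushforward_nonneg hQ _) hR, sum_pushforward_mul]
    simp only [liftIncrements, log_div (hR _).ne' two_ne_zero, mul_sub, sum_sub_distrib,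
      ← sum_mul, hQ1]
    ring
  have hjoint : entropy Q ≤ log 2 + entropy q := by
    have h := entropy_pushforward_le_of_comp hQ (f := fun x => (x 0, increments x)) (g := id)
      (fun y => ![y.1, xor y.1 y.2.1, xor (xor y.1 y.2.1) y.2.2]) fun x => by
        funext i; fin_cases i <;> simp [increments]
    rw [pushforward_id] at h
    linarith [entropy_pair_le hQ hQ1 (· 0) increments, entropy_le_log_two hQ hQ1 (· 0)]
  have hX₂ := entropy_le_log_two hQ hQ1 (· 2)
  -- `H(X₀ | W) ≥ H(X₀ | U, V)`
  have hcond : entropy Q + entropy (pushforward (fun x => xor (x 0) (x 2)) Q) ≤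
      entropy (pushforward (fun x => (x 0, x 2)) Q) + entropy q := by
    have h := entropy_pushforward_le_of_comp hQ (f := fun x => ((x 0, x 2), increments x))
      (g := id) (fun y => ![y.1.1, xor y.1.1 y.2.1, y.1.2]) fun x => by
        funext i; fin_cases i <;> simp [increments]
    rw [pushforward_id] at h
    have hsub : entropy (pushforward (fun x => ((x 0, x 2), increments x)) Q) +
        entropy (pushforward (fun x => xor (x 0) (x 2)) Q) ≤
        entropy (pushforward (fun x => (x 0, x 2)) Q) + entropy q :=
      entropy_pair_add_entropy_le hQ (fun x => (x 0, x 2)) increments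
        (k₁ := fun y => xor y.1 y.2) (k₂ := fun y => xor y.1 y.2) fun x => by
          simp only [increments]; cases x 0 <;> cases x 1 <;> cases x 2 <;> rfl
    linarith
  have hX₀₁ : entropy (pushforward (fun x => (x 0, x 1)) Q) ≤
      entropy (pushforward (· 1) Q) + entropy (pushforward (fun x => xor (x 0) (x 1)) Q) := by
    refine (entropy_pushforward_le_of_comp hQ (f := fun x => (x 1, xor (x 0) (x 1)))
      (fun y => (xor y.1 y.2, y.1)) fun x => ?_).trans (entropy_pair_le hQ hQ1 _ _)
    cases x 0 <;> cases x 1 <;> rfl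
  rw [hW, hU, hD, mutInf_eq_entropy hQ, mutInf_eq_entropy hQ]
  nlinarith [mul_nonneg (sub_nonneg.2 hc1) (by linarith : 0 ≤ log 2 + entropy q - entropy Q),
    mul_nonneg hc0 (sub_nonneg.2 hX₂), mul_nonneg hc0 (sub_nonneg.2 hcond),
    mul_nonneg hc0 (sub_nonneg.2 hX₀₁)]

def bernoulliMass (p : ℝ) (b : Bool) : ℝ := if b then p else 1 - p

lemma log_bernoulliMass (p : ℝ) (b : Bool) :
    log (bernoulliMass p b) = log (1 - p) - b.toNat * (log (1 - p) - log p) := by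
  cases b <;> simp [bernoulliMass]

lemma entropy_pushforward_eq_neg_klDiv_sub {α : Type*} [Fintype α] {q : α → ℝ}
    (hq : ∀ a, 0 ≤ q a) {p : ℝ} (hp0 : 0 < p) (hp1 : p < 1) (φ : α → Bool) :
    entropy (pushforward φ q) = -klDiv (pushforward φ q) (bernoulliMass p) -
      ∑ a, q a * log (bernoulliMass p (φ a)) := by
  have hb : ∀ b, 0 < bernoulliMass p b := fun b => by
    cases b <;> simp [bernoulliMass, hp0, hp1]
  rw [klDiv_eq_neg_entropy_sub (pushforward_nonneg hq φ) hb, sum_pushforward_mul]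
  ring

lemma klDiv_bernoulliMass_nonneg {α : Type*} [Fintype α] {q : α → ℝ} (hq : ∀ a, 0 ≤ q a)
    (hq1 : ∑ a, q a = 1) {p : ℝ} (hp0 : 0 < p) (hp1 : p < 1) (φ : α → Bool) :
    0 ≤ klDiv (pushforward φ q) (bernoulliMass p) :=
  klDiv_nonneg (pushforward_nonneg hq φ)
    (fun b => by cases b <;> simp [bernoulliMass, hp0.le, hp1.le])
    (fun b h => by cases b <;> simp [bernoulliMass] at h <;> linarith)
    (by rw [sum_pushforward, hq1]; simp [bernoulliMass])

/-- On increments `y = increments x` this is `1[x₀ ≠ x₁] - 1[x₀ ≠ x₂]`. -/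
def disagreementDiff (y : Bool × Bool) : ℝ := y.1.toNat - (xor y.1 y.2).toNat

theorem neg_log_le_klDiv_add_mul_entropy_sub {R g : Bool × Bool → ℝ} {t Z c p : ℝ}
    (hR : ∀ y, 0 < R y) (hZ : 0 < Z) (hg : ∀ y, g y = R y * exp (t * disagreementDiff y) / Z)
    (hp : pushforward (fun y => xor y.1 y.2) g = bernoulliMass p) (hc0 : 0 ≤ c) (hc1 : c ≤ 1)
    (hct : c * (log (1 - p) - log p) = t) {q : Bool × Bool → ℝ} (hq : ∀ y, 0 ≤ q y)
    (hq1 : ∑ y, q y = 1) :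
    -log Z ≤ klDiv q R + c * (entropy (pushforward (fun y => xor y.1 y.2) q) -
      entropy (pushforward Prod.fst q)) := by
  have hg0 : ∀ y, 0 < g y := fun y => by rw [hg]; have := hR y; positivity
  have hbern : ∀ b, 0 < bernoulliMass p b := fun b => by
    have := le_pushforward_apply (fun y => (hg0 y).le) (fun y : Bool × Bool => xor y.1 y.2)
      (false, b)
    rw [hp, Bool.false_xor] at this
    exact (hg0 _).trans_le this
  have hp0 : 0 < p := hbern true
  have hp1 : p < 1 := sub_pos.1 (hbern false)
  have hlog_g : ∀ y, log (g y) = log (R y) + t * disagreementDiff y - log Z := fun y => by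
    rw [hg, log_div (by have := hR y; positivity) hZ.ne', log_mul (hR y).ne' (exp_pos _).ne',
      log_exp]
  have hRg : klDiv q R = klDiv q g + ∑ y, q y * (t * disagreementDiff y - log Z) := by
    rw [klDiv_eq_neg_entropy_sub hq hR, klDiv_eq_neg_entropy_sub hq hg0]
    simp only [hlog_g, mul_sub, mul_add, sum_sub_distrib, sum_add_distrib]
    ring
  have hdpi : klDiv (pushforward (fun y => xor y.1 y.2) q) (bernoulliMass p) ≤ klDiv q g :=
    hp ▸ klDiv_pushforward_le hq (fun y => (hg0 y).le) (fun y h => absurd h (hg0 y).ne') _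
  -- `c` is chosen so that the Bernoulli log-likelihoods absorb the tilt
  have hpt : ∀ y, t * disagreementDiff y - log Z -
      c * log (bernoulliMass p (xor y.1 y.2)) + c * log (bernoulliMass p y.1) = -log Z := by
    intro y
    rw [log_bernoulliMass, log_bernoulliMass, disagreementDiff, ← hct]
    ring
  have hsum : ∑ y, q y * (t * disagreementDiff y - log Z) -
      c * ∑ y, q y * log (bernoulliMass p (xor y.1 y.2)) +
      c * ∑ y, q y * log (bernoulliMass p y.1) = -log Z := by
    rw [mul_sum, mul_sum, ← sum_sub_distrib, ← sum_add_distrib,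
      show -log Z = ∑ y, q y * -log Z by rw [← sum_mul, hq1, one_mul]]
    refine sum_congr rfl fun y _ => ?_
    rw [← hpt y]
    ring
  rw [hRg, entropy_pushforward_eq_neg_klDiv_sub hq hp0 hp1,
    entropy_pushforward_eq_neg_klDiv_sub hq hp0 hp1]
  nlinarith [mul_le_mul_of_nonneg_left hdpi hc0,
    klDiv_bernoulliMass_nonneg hq hq1 hp0 hp1 (fun y => xor y.1 y.2),
    mul_nonneg hc0 (klDiv_bernoulliMass_nonneg hq hq1 hp0 hp1 Prod.fst)]

def incrementLaw (θ : ℝ) (y : Bool × Bool) : ℝ := bernoulliMass θ y.1 * bernoulliMass θ y.2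

lemma chainA_edgeFinset : chainA.edgeFinset = {s(0, 1), s(1, 2)} := by
  ext e
  induction e using Sym2.ind
  rw [SimpleGraph.mem_edgeFinset]
  simp [chainA]
  omega

lemma pairWeight_mk (θ : ℝ) {p : ℕ} (x : Fin p → Bool) (i j : Fin p) :
    pairWeight θ x s(i, j) = bernoulliMass θ (xor (x i) (x j)) := by
  simp only [pairWeight, Sym2.lift_mk, bernoulliMass]
  by_cases h : x i = x j <;> simp [h]

lemma isingP_chainA (θ : ℝ) : isingP θ chainA = liftIncrements (incrementLaw θ) := by
  funext x
  rw [isingP, chainA_edgeFinset, prod_pair (by decide), pairWeight_mk, pairWeight_mk,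
    liftIncrements, incrementLaw, increments]
  ring

def chainTilt (θ : ℝ) : ℝ := log ((1 - θ) / θ) / 2

def chainNormalizer (θ : ℝ) : ℝ := 1 - θ * (1 - √(4 * θ * (1 - θ)))

/-- The tilt `chainTilt θ` makes the values at `(false, true)` and `(true, true)` equal, so that the
lifted law is symmetric under `X₁ ↔ X₂`. -/
def optimalIncrementLaw (θ : ℝ) (y : Bool × Bool) : ℝ :=
  incrementLaw θ y * exp (chainTilt θ * disagreementDiff y) / chainNormalizer θ

section ChainParameters

variable {θ : ℝ}

lemma incrementLaw_pos (hθ0 : 0 < θ) (hθ1 : θ < 1 / 2) (y : Bool × Bool) :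
    0 < incrementLaw θ y := by
  have hb : ∀ b, 0 < bernoulliMass θ b := fun b => by
    cases b <;> simp [bernoulliMass, hθ0]; linarith
  exact mul_pos (hb _) (hb _)

lemma mul_exp_chainTilt_sq (hθ0 : 0 < θ) (hθ1 : θ < 1 / 2) :
    θ * exp (chainTilt θ) ^ 2 = 1 - θ := by
  rw [← exp_nat_mul, chainTilt, Nat.cast_ofNat, mul_div_cancel₀ _ two_ne_zero,
    exp_log (div_pos (by linarith) hθ0)]
  field_simp

lemma one_lt_exp_chainTilt (hθ0 : 0 < θ) (hθ1 : θ < 1 / 2) : 1 < exp (chainTilt θ) := by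
  rw [one_lt_exp_iff]
  exact div_pos (log_pos ((one_lt_div hθ0).2 (by linarith))) two_pos

lemma chainNormalizer_eq (hθ0 : 0 < θ) (hθ1 : θ < 1 / 2) :
    chainNormalizer θ = 1 - θ + 2 * θ ^ 2 * exp (chainTilt θ) := by
  have h := mul_exp_chainTilt_sq hθ0 hθ1
  rw [chainNormalizer, show 4 * θ * (1 - θ) = (2 * θ * exp (chainTilt θ)) ^ 2 by
    rw [← h]; ring, sqrt_sq (by positivity)]
  ring

lemma chainNormalizer_pos (hθ0 : 0 < θ) (hθ1 : θ < 1 / 2) : 0 < chainNormalizer θ := by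
  rw [chainNormalizer_eq hθ0 hθ1]
  have := exp_pos (chainTilt θ)
  nlinarith

lemma optimalIncrementLaw_values (hθ0 : 0 < θ) (hθ1 : θ < 1 / 2) :
    optimalIncrementLaw θ (false, false) = (1 - θ) ^ 2 / chainNormalizer θ ∧
    optimalIncrementLaw θ (false, true) = θ ^ 2 * exp (chainTilt θ) / chainNormalizer θ ∧
    optimalIncrementLaw θ (true, false) = θ * (1 - θ) / chainNormalizer θ ∧
    optimalIncrementLaw θ (true, true) = θ ^ 2 * exp (chainTilt θ) / chainNormalizer θ := by
  have h := mul_exp_chainTilt_sq hθ0 hθ1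
  simp only [optimalIncrementLaw, incrementLaw, bernoulliMass, disagreementDiff]
  norm_num [exp_neg]
  refine ⟨by ring, ?_, by ring⟩
  rw [← h]
  field_simp

lemma optimalIncrementLaw_pos (hθ0 : 0 < θ) (hθ1 : θ < 1 / 2) (y : Bool × Bool) :
    0 < optimalIncrementLaw θ y := by
  rw [optimalIncrementLaw]
  have := incrementLaw_pos hθ0 hθ1 y
  have := chainNormalizer_pos hθ0 hθ1
  positivity

lemma sum_optimalIncrementLaw (hθ0 : 0 < θ) (hθ1 : θ < 1 / 2) :
    ∑ y, optimalIncrementLaw θ y = 1 := by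
  obtain ⟨h00, h01, h10, h11⟩ := optimalIncrementLaw_values hθ0 hθ1
  rw [Fintype.sum_prod_type]
  simp only [Fintype.sum_bool, h00, h01, h10, h11]
  field_simp [(chainNormalizer_pos hθ0 hθ1).ne']
  rw [chainNormalizer_eq hθ0 hθ1]
  ring

lemma optimalIncrementLaw_false_true (hθ0 : 0 < θ) (hθ1 : θ < 1 / 2) :
    optimalIncrementLaw θ (false, true) = optimalIncrementLaw θ (true, true) := by
  obtain ⟨-, h01, -, h11⟩ := optimalIncrementLaw_values hθ0 hθ1
  rw [h01, h11]

lemma klDiv_optimalIncrementLaw (hθ0 : 0 < θ) (hθ1 : θ < 1 / 2) :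
    klDiv (optimalIncrementLaw θ) (incrementLaw θ) = -log (chainNormalizer θ) := by
  have hZ := chainNormalizer_pos hθ0 hθ1
  have hlog : ∀ y, log (optimalIncrementLaw θ y / incrementLaw θ y) =
      chainTilt θ * disagreementDiff y - log (chainNormalizer θ) := fun y => by
    rw [optimalIncrementLaw, mul_div_assoc,
      mul_div_cancel_left₀ _ (incrementLaw_pos hθ0 hθ1 y).ne', log_div (exp_pos _).ne' hZ.ne',
      log_exp]
  have hsum := sum_optimalIncrementLaw hθ0 hθ1
  simp only [klDiv, hlog, Fintype.sum_prod_type, Fintype.sum_bool, disagreementDiff] at hsum ⊢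
  norm_num
  rw [optimalIncrementLaw_false_true hθ0 hθ1] at hsum ⊢
  linear_combination (-log (chainNormalizer θ)) * hsum

/-- With `r = exp (chainTilt θ)` the Bernoulli parameter `p` of `W` under `optimalIncrementLaw θ`
has odds `(1 - p) / p = r ^ 2 - r + 1 ≥ r`, whence `c = log r / log ((1 - p) / p) ≤ 1`. -/
lemma exists_chainMultiplier (hθ0 : 0 < θ) (hθ1 : θ < 1 / 2) :
    ∃ c p : ℝ, 0 ≤ c ∧ c ≤ 1 ∧ c * (log (1 - p) - log p) = chainTilt θ ∧
      pushforward (fun y => xor y.1 y.2) (optimalIncrementLaw θ) = bernoulliMass p := by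
  obtain ⟨h00, h01, h10, h11⟩ := optimalIncrementLaw_values hθ0 hθ1
  have h := mul_exp_chainTilt_sq hθ0 hθ1
  have hr1 := one_lt_exp_chainTilt hθ0 hθ1
  have hZ := chainNormalizer_pos hθ0 hθ1
  have hZeq := chainNormalizer_eq hθ0 hθ1
  have hlogr : log (exp (chainTilt θ)) = chainTilt θ := log_exp _
  set r := exp (chainTilt θ)
  set Z := chainNormalizer θ
  set p := (θ ^ 2 * r + θ * (1 - θ)) / Z
  have hp0 : 0 < p := by
    have : 0 < 1 - θ := by linarith
    positivity
  have hp : pushforward (fun y => xor y.1 y.2) (optimalIncrementLaw θ) = bernoulliMass p := by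
    ext b
    cases b <;> simp [pushforward, Fintype.sum_prod_type, sum_filter, bernoulliMass, h00, h01,
      h10, h11, p] <;> field_simp <;> (try rw [hZeq]) <;> ring
  have hodds : 1 - p = (r ^ 2 - r + 1) * p := by
    simp only [p]
    field_simp
    rw [hZeq]
    linear_combination (-(1 - 2 * θ + θ * r)) * h
  have hL : 0 < log (r ^ 2 - r + 1) := log_pos (by nlinarith)
  have h1p : 0 < 1 - p := by rw [hodds]; exact mul_pos (by nlinarith) hp0
  refine ⟨chainTilt θ / log (r ^ 2 - r + 1), p, ?_, ?_, ?_, hp⟩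
  · exact div_nonneg (hlogr ▸ (log_pos hr1).le) hL.le
  · rw [div_le_one hL, ← hlogr]
    exact log_le_log (by linarith) (by nlinarith)
  · rw [← log_div h1p.ne' hp0.ne', hodds, mul_div_cancel_right₀ _ hp0.ne',
      div_mul_cancel₀ _ hL.ne']

theorem neg_log_chainNormalizer_le_klDiv (hθ0 : 0 < θ) (hθ1 : θ < 1 / 2)
    {Q : (Fin 3 → Bool) → ℝ} (hQ : ∀ x, 0 ≤ Q x) (hQ1 : ∑ x, Q x = 1)
    (hmi : mutInf Q 0 1 ≤ mutInf Q 0 2) :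
    -log (chainNormalizer θ) ≤ klDiv Q (isingP θ chainA) := by
  obtain ⟨c, p, hc0, hc1, hct, hp⟩ := exists_chainMultiplier hθ0 hθ1
  calc -log (chainNormalizer θ)
      ≤ klDiv (pushforward increments Q) (incrementLaw θ) +
          c * (entropy (pushforward (fun y => xor y.1 y.2) (pushforward increments Q)) -
            entropy (pushforward Prod.fst (pushforward increments Q))) :=
        neg_log_le_klDiv_add_mul_entropy_sub (incrementLaw_pos hθ0 hθ1)
          (chainNormalizer_pos hθ0 hθ1) (fun _ => rfl) hp hc0 hc1 hct
          (pushforward_nonneg hQ _) ((sum_pushforward _ _).trans hQ1)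
    _ ≤ klDiv Q (liftIncrements (incrementLaw θ)) + c * (mutInf Q 0 1 - mutInf Q 0 2) :=
        klDiv_increments_add_le hQ hQ1 (incrementLaw_pos hθ0 hθ1) hc0 hc1
    _ ≤ klDiv Q (isingP θ chainA) := by
        rw [isingP_chainA]
        nlinarith [mul_nonneg hc0 (sub_nonneg.2 hmi)]

end ChainParameters

end

/-- the Chow-Liu error exponent for the 3-node chain: the minimum of
`D(Q‖P)` over pmfs `Q` on `{0,1}³` with `I(Q_{1,2}) ≤ I(Q_{1,3})` equals
`-log(1 - θ(1 - √(4θ(1-θ))))`. -/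
theorem stmt7 (θ : ℝ) (hθ0 : 0 < θ) (hθ1 : θ < 1 / 2) :
    IsLeast { d : ℝ | ∃ Q : (Fin 3 → Bool) → ℝ, (∀ x, 0 ≤ Q x) ∧
        (∑ x : Fin 3 → Bool, Q x = 1) ∧ mutInf Q 0 1 ≤ mutInf Q 0 2 ∧
        d = klDiv Q (isingP θ chainA) }
      (-Real.log (1 - θ * (1 - Real.sqrt (4 * θ * (1 - θ))))) := by
  have hg0 := optimalIncrementLaw_pos hθ0 hθ1
  refine ⟨⟨liftIncrements (optimalIncrementLaw θ), fun x => div_nonneg (hg0 _).le zero_le_two,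
    ?_, ?_, ?_⟩, ?_⟩
  · rw [sum_liftIncrements, sum_optimalIncrementLaw hθ0 hθ1]
  · exact (mutInf_liftIncrements (fun y => (hg0 y).le)
      (optimalIncrementLaw_false_true hθ0 hθ1)).le
  · rw [isingP_chainA, klDiv_liftIncrements, klDiv_optimalIncrementLaw hθ0 hθ1, chainNormalizer]
  · rintro d ⟨Q, hQ, hQ1, hmi, rfl⟩
    exact neg_log_chainNormalizer_le_klDiv hθ0 hθ1 hQ hQ1 hmi
end

section
/- Let θ ∈ (0, 1/2) and q ∈ [0, 1/2). Let U, V, W be the three homogeneous zero-field Ising distributions on {0,1}³ with edge sets {{1,2},{2,3}}, {{1,3},{2,3}}, {{1,2},{1,3}} respectively (i.e., U = P_{T,θ} for the corresponding tree, and similarly for V and W), and let U^{(q)}, V^{(q)}, W^{(q)} be their noisy versions: U^{(q)}(y) = ∑_{x∈{0,1}³} q^{δ(x,y)}·(1−q)^{3−δ(x,y)}·U(x), where δ(x,y) is the Hamming distance, and similarly for V^{(q)}, W^{(q)}. Then for any observed samples y_1,…,y_n ∈ {0,1}³: ∑_{k=1}^n log U^{(q)}(y_k) > ∑_{k=1}^n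 log V^{(q)}(y_k) if and only if Â_{1,2} > Â_{1,3}, and ∑_{k=1}^n log U^{(q)}(y_k) > ∑_{k=1}^n log W^{(q)}(y_k) if and only if Â_{2,3} > Â_{1,3}, where Â_{i,j} := (1/n)·#{k : y_{k,i} = y_{k,j}}. Consequently, the maximum-likelihood estimate of the edge set from the noisy samples is the maximum-weight spanning tree for the weights Â_{i,j}. -/
open scoped Classical BigOperators
open Filter

/-!
Relabelling the vertices maps each of the three chains onto the path `0 - 1 - 2` and commutes
with the noise channel, so only the noisy path distribution has to be computed: an observation
`y` has probability `m k`, where `k` is the number of path edges along which `y` agrees. Three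
bits either all agree or agree on exactly one pair, hence
`log U(y) - log V(y) = (log m 1 - log m 0) * ([y₀ = y₁] - [y₀ = y₂])`, and `m 0 < m 1` precisely
because `θ < 1/2` and `q < 1/2`. Summing over the samples turns each log-likelihood comparison
into a comparison of agreement counts.
-/

open Finset

lemma sum_fun_fin_succ {α M : Type*} [Fintype α] [AddCommMonoid M] {n : ℕ}
    (f : (Fin (n + 1) → α) → M) : ∑ x, f x = ∑ a, ∑ x : Fin n → α, f (Matrix.vecCons a x) := by
  rw [← (Fin.consEquiv fun _ => α).sum_comp, Fintype.sum_prod_type]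
  rfl

lemma hamming_eq_sum {p : ℕ} (x y : Fin p → Bool) :
    hamming x y = ∑ i, if x i = y i then 0 else 1 := by
  simp only [hamming, card_filter, ite_not]

lemma hamming_comp_perm {p : ℕ} (σ : Equiv.Perm (Fin p)) (x y : Fin p → Bool) :
    hamming (x ∘ σ) (y ∘ σ) = hamming x y := by
  simp only [hamming, card_filter]
  exact Equiv.sum_comp σ (fun i => if x i ≠ y i then 1 else 0)

lemma noisy_comp_perm (q : ℝ) {p : ℕ} (P : (Fin p → Bool) → ℝ) (σ : Equiv.Perm (Fin p))
    (y : Fin p → Bool) : noisy q (fun x => P (x ∘ σ)) y = noisy q P (y ∘ σ) :=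
  Fintype.sum_equiv (σ.symm.arrowCongr (Equiv.refl Bool)) _ _ fun x => by
    show _ = q ^ hamming (x ∘ σ) (y ∘ σ) * (1 - q) ^ (p - hamming (x ∘ σ) (y ∘ σ)) * P (x ∘ σ)
    rw [hamming_comp_perm]

lemma pairWeight_comp_perm (θ : ℝ) {p : ℕ} (σ : Equiv.Perm (Fin p)) (x : Fin p → Bool)
    (e : Sym2 (Fin p)) : pairWeight θ (x ∘ σ) e = pairWeight θ x (e.map σ) := by
  induction e using Sym2.ind
  rfl

lemma edgeFinset_fromEdgeSet_pair {V : Type*} {e f : Sym2 V} (he : ¬ e.IsDiag)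
    (hf : ¬ f.IsDiag) [Fintype (SimpleGraph.fromEdgeSet {e, f}).edgeSet] :
    (SimpleGraph.fromEdgeSet {e, f}).edgeFinset = {e, f} := by
  ext g
  simp only [SimpleGraph.mem_edgeFinset, SimpleGraph.edgeSet_fromEdgeSet]
  aesop

lemma isingP_fromEdgeSet_pair (θ : ℝ) {p : ℕ} {e f : Sym2 (Fin p)} (he : ¬ e.IsDiag)
    (hf : ¬ f.IsDiag) (hef : e ≠ f) (x : Fin p → Bool) :
    isingP θ (SimpleGraph.fromEdgeSet {e, f}) x =
      1 / 2 * (pairWeight θ x e * pairWeight θ x f) := by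
  rw [isingP, ← prod_pair hef]
  congr 2
  convert edgeFinset_fromEdgeSet_pair he hf

lemma sum_lt_sum_iff_card_filter_lt {ι α : Type*} [Fintype ι] {f g : α → ℝ} {P Q : α → Prop}
    [DecidablePred P] [DecidablePred Q] {c : ℝ} (hc : 0 < c)
    (hfg : ∀ a, f a - g a = c * ((if P a then 1 else 0) - if Q a then 1 else 0)) (y : ι → α) :
    ∑ k, g (y k) < ∑ k, f (y k) ↔ #{k | Q (y k)} < #{k | P (y k)} := by
  rw [← sub_pos, ← sum_sub_distrib]
  simp only [hfg, ← mul_sum, sum_sub_distrib, sum_boole, mul_pos_iff_of_pos_left hc, sub_pos,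
    Nat.cast_lt]

lemma Ahat_lt_Ahat_iff {p n : ℕ} (y : Fin n → Fin p → Bool) (i j k l : Fin p) :
    Ahat y i j < Ahat y k l ↔ #{m | y m i = y m j} < #{m | y m k = y m l} := by
  rcases n.eq_zero_or_pos with rfl | hn
  · simp [Ahat]
  · rw [Ahat, Ahat, div_lt_div_iff_of_pos_right (by exact_mod_cast hn), Nat.cast_lt]

lemma isingP_chainA_s16 (θ : ℝ) (x : Fin 3 → Bool) : isingP θ chainA x =
    1 / 2 * ((if x 0 = x 1 then 1 - θ else θ) * (if x 1 = x 2 then 1 - θ else θ)) := by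
  rw [chainA, isingP_fromEdgeSet_pair _ (by decide) (by decide) (by decide)]
  rfl

lemma isingP_chainB (θ : ℝ) (x : Fin 3 → Bool) :
    isingP θ chainB x = isingP θ chainA (x ∘ Equiv.swap 1 2) := by
  rw [chainA, chainB, isingP_fromEdgeSet_pair, isingP_fromEdgeSet_pair, pairWeight_comp_perm,
    pairWeight_comp_perm, show s(0, 1).map (Equiv.swap (1 : Fin 3) 2) = s(0, 2) by decide,
    show s(1, 2).map (Equiv.swap (1 : Fin 3) 2) = s(1, 2) by decide]
  all_goals decide

lemma isingP_chainC (θ : ℝ) (x : Fin 3 → Bool) :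
    isingP θ chainC x = isingP θ chainA (x ∘ Equiv.swap 0 1) := by
  rw [chainA, chainC, isingP_fromEdgeSet_pair, isingP_fromEdgeSet_pair, pairWeight_comp_perm,
    pairWeight_comp_perm, show s(0, 1).map (Equiv.swap (0 : Fin 3) 1) = s(0, 1) by decide,
    show s(1, 2).map (Equiv.swap (0 : Fin 3) 1) = s(0, 2) by decide]
  all_goals decide

/-- The value `m k` of the noisy path distribution at an observation agreeing along `k ≤ 2` of
its edges (so `2 - k` does not truncate). -/
noncomputable def noisyChainMass (θ q : ℝ) (k : ℕ) : ℝ :=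
  q * (1 - q) / 2 + (1 - 2 * q) ^ 2 * ((1 - θ) ^ k * θ ^ (2 - k)) / 2

lemma noisy_chainA (θ q : ℝ) (y : Fin 3 → Bool) :
    noisy q (isingP θ chainA) y =
      noisyChainMass θ q ((if y 0 = y 1 then 1 else 0) + if y 1 = y 2 then 1 else 0) := by
  obtain ⟨a, b, c, rfl⟩ : ∃ a b c, y = ![a, b, c] :=
    ⟨y 0, y 1, y 2, by ext i; fin_cases i <;> rfl⟩
  simp only [noisy, sum_fun_fin_succ, Fintype.sum_bool, isingP_chainA_s16,
    hamming_eq_sum, Fin.sum_univ_three]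
  cases a <;> cases b <;> cases c <;> simp [noisyChainMass] <;> ring

lemma noisy_chainB (θ q : ℝ) (y : Fin 3 → Bool) :
    noisy q (isingP θ chainB) y = noisy q (isingP θ chainA) (y ∘ Equiv.swap 1 2) := by
  rw [← noisy_comp_perm]
  exact congrArg (noisy q · y) (funext (isingP_chainB θ))

lemma noisy_chainC (θ q : ℝ) (y : Fin 3 → Bool) :
    noisy q (isingP θ chainC) y = noisy q (isingP θ chainA) (y ∘ Equiv.swap 0 1) := by
  rw [← noisy_comp_perm]
  exact congrArg (noisy q · y) (funext (isingP_chainC θ))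

lemma log_noisy_chainA_sub_chainB (θ q : ℝ) (y : Fin 3 → Bool) :
    Real.log (noisy q (isingP θ chainA) y) - Real.log (noisy q (isingP θ chainB) y) =
      (Real.log (noisyChainMass θ q 1) - Real.log (noisyChainMass θ q 0)) *
        ((if y 0 = y 1 then 1 else 0) - if y 0 = y 2 then 1 else 0) := by
  rw [noisy_chainB, noisy_chainA, noisy_chainA]
  simp only [Function.comp_apply, Equiv.swap_apply_of_ne_of_ne (by decide : (0 : Fin 3) ≠ 1)
    (by decide : (0 : Fin 3) ≠ 2), Equiv.swap_apply_left, Equiv.swap_apply_right]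
  cases y 0 <;> cases y 1 <;> cases y 2 <;> simp

lemma log_noisy_chainA_sub_chainC (θ q : ℝ) (y : Fin 3 → Bool) :
    Real.log (noisy q (isingP θ chainA) y) - Real.log (noisy q (isingP θ chainC) y) =
      (Real.log (noisyChainMass θ q 1) - Real.log (noisyChainMass θ q 0)) *
        ((if y 1 = y 2 then 1 else 0) - if y 0 = y 2 then 1 else 0) := by
  rw [noisy_chainC, noisy_chainA, noisy_chainA]
  simp only [Function.comp_apply, Equiv.swap_apply_of_ne_of_ne (by decide : (2 : Fin 3) ≠ 0)
    (by decide : (2 : Fin 3) ≠ 1), Equiv.swap_apply_left, Equiv.swap_apply_right]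
  cases y 0 <;> cases y 1 <;> cases y 2 <;> simp

lemma noisyChainMass_zero_pos {θ q : ℝ} (hθ0 : 0 < θ) (hq0 : 0 ≤ q) (hq1 : q < 1 / 2) :
    0 < noisyChainMass θ q 0 := by
  have : 0 < 1 - 2 * q := by linarith
  have : 0 ≤ q * (1 - q) := mul_nonneg hq0 (by linarith)
  unfold noisyChainMass
  positivity

lemma noisyChainMass_zero_lt_one {θ q : ℝ} (hθ0 : 0 < θ) (hθ1 : θ < 1 / 2) (hq1 : q < 1 / 2) :
    noisyChainMass θ q 0 < noisyChainMass θ q 1 := by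
  have hgap : noisyChainMass θ q 1 - noisyChainMass θ q 0 =
      (1 - 2 * q) ^ 2 * (θ * (1 - 2 * θ)) / 2 := by
    unfold noisyChainMass
    ring
  rw [← sub_pos, hgap]
  exact div_pos (mul_pos (pow_pos (by linarith) 2) (mul_pos hθ0 (by linarith))) two_pos

/-- with noisy samples, the pairwise log-likelihood comparisons between
the three candidate 3-node trees reduce to comparisons of empirical agreement weights;
consequently the ML tree is the maximum-weight spanning tree for the weights `Â`. -/
theorem stmt16 (θ q : ℝ) (hθ0 : 0 < θ) (hθ1 : θ < 1 / 2) (hq0 : 0 ≤ q) (hq1 : q < 1 / 2)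
    (n : ℕ) (y : Fin n → Fin 3 → Bool) :
    ((∑ k, Real.log (noisy q (isingP θ chainB) (y k))
        < ∑ k, Real.log (noisy q (isingP θ chainA) (y k))) ↔
      Ahat y 0 2 < Ahat y 0 1) ∧
    ((∑ k, Real.log (noisy q (isingP θ chainC) (y k))
        < ∑ k, Real.log (noisy q (isingP θ chainA) (y k))) ↔
      Ahat y 0 2 < Ahat y 1 2) ∧
    ((Ahat y 0 2 < Ahat y 0 1 ∧ Ahat y 0 2 < Ahat y 1 2) ↔
      (∑ k, Real.log (noisy q (isingP θ chainB) (y k))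
          < ∑ k, Real.log (noisy q (isingP θ chainA) (y k)) ∧
       ∑ k, Real.log (noisy q (isingP θ chainC) (y k))
          < ∑ k, Real.log (noisy q (isingP θ chainA) (y k)))) := by
  have hc : 0 < Real.log (noisyChainMass θ q 1) - Real.log (noisyChainMass θ q 0) :=
    sub_pos.2 (Real.log_lt_log (noisyChainMass_zero_pos hθ0 hq0 hq1)
      (noisyChainMass_zero_lt_one hθ0 hθ1 hq1))
  have hB := (sum_lt_sum_iff_card_filter_lt hc (log_noisy_chainA_sub_chainB θ q) y).trans
    (Ahat_lt_Ahat_iff y 0 2 0 1).symm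
  have hC := (sum_lt_sum_iff_card_filter_lt hc (log_noisy_chainA_sub_chainC θ q) y).trans
    (Ahat_lt_Ahat_iff y 0 2 1 2).symm
  exact ⟨hB, hC, and_congr hB.symm hC.symm⟩
end
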